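/- arXiv:2408.04613 — 11 statements merged into one kernel-verified Lean document; each statement's English description precedes it below -/
import Mathlib

section
/- The min-plus product of two Monge matrices is a Monge matrix: if A is a p×q Monge matrix and B is a q×r Monge matrix (q ≥ 1), then C = A ⊗ B defined by C[i,k] = min over j ∈ [0..q) of (A[i,j] + B[j,k]) satisfies C[i,k] + C[i+1,k+1] ≤ C[i,k+1] + C[i+1,k] for all i ∈ [0..p-1), k ∈ [0..r-1). -/
/-- Extended quadrangle inequality for adjacent rows and arbitrary columns. -/
lemma monge_quad_cols (p q : ℕ) (M : ℕ → ℕ → ℝ)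
    (hM : ∀ i j, i + 1 < p → j + 1 < q →
        M i j + M (i + 1) (j + 1) ≤ M i (j + 1) + M (i + 1) j)
    (i : ℕ) (hi : i + 1 < p) :
    ∀ j' j, j ≤ j' → j' < q → M i j + M (i + 1) j' ≤ M i j' + M (i + 1) j := by
  intro j'
  induction j' with
  | zero => intro j hj _; interval_cases j; linarith
  | succ n ih =>
    intro j hj hlt
    rcases Nat.lt_or_ge j (n + 1) with h | h
    · have h1 := ih j (Nat.lt_succ_iff.mp h) (by omega)
      have h2 := hM i n hi hlt
      linarith
    · have : j = n + 1 := by omega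
      subst this; linarith

/-- The min-plus product of two Monge matrices is Monge. -/
theorem minplus_product_monge (p q r : ℕ) (hq : 0 < q) (A B C : ℕ → ℕ → ℝ)
    (hA : ∀ i j, i + 1 < p → j + 1 < q →
        A i j + A (i + 1) (j + 1) ≤ A i (j + 1) + A (i + 1) j)
    (hB : ∀ j k, j + 1 < q → k + 1 < r →
        B j k + B (j + 1) (k + 1) ≤ B j (k + 1) + B (j + 1) k)
    (hC : ∀ i k, C i k =
        (Finset.range q).inf' (Finset.nonempty_range_iff.mpr hq.ne')
          (fun j => A i j + B j k)) :
    ∀ i k, i + 1 < p → k + 1 < r →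
      C i k + C (i + 1) (k + 1) ≤ C i (k + 1) + C (i + 1) k := by
  intro i k hi hk
  have hne : (Finset.range q).Nonempty := Finset.nonempty_range_iff.mpr hq.ne'
  obtain ⟨j1, hj1mem, hj1⟩ := Finset.exists_mem_eq_inf' hne (fun j => A i j + B j (k + 1))
  obtain ⟨j2, hj2mem, hj2⟩ := Finset.exists_mem_eq_inf' hne (fun j => A (i + 1) j + B j k)
  have hj1q := Finset.mem_range.mp hj1mem
  have hj2q := Finset.mem_range.mp hj2mem
  have hCik1 : C i (k + 1) = A i j1 + B j1 (k + 1) := by rw [hC]; exact hj1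
  have hCi1k : C (i + 1) k = A (i + 1) j2 + B j2 k := by rw [hC]; exact hj2
  rcases le_total j1 j2 with h | h
  · -- use B's quadrangle for rows j1 ≤ j2 and columns k, k+1
    have hik : C i k ≤ A i j1 + B j1 k := by
      rw [hC]; exact Finset.inf'_le _ hj1mem
    have hi1k1 : C (i + 1) (k + 1) ≤ A (i + 1) j2 + B j2 (k + 1) := by
      rw [hC]; exact Finset.inf'_le _ hj2mem
    -- transpose B so rows/cols swap
    have hq := monge_quad_cols r q (fun k j => B j k)
      (fun k j hkk hjj => by have := hB j k hjj hkk; linarith) k hk j2 j1 h hj2q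
    linarith
  · -- use A's quadrangle for rows i, i+1 and columns j2 ≤ j1
    have hik : C i k ≤ A i j2 + B j2 k := by
      rw [hC]; exact Finset.inf'_le _ hj2mem
    have hi1k1 : C (i + 1) (k + 1) ≤ A (i + 1) j1 + B j1 (k + 1) := by
      rw [hC]; exact Finset.inf'_le _ hj1mem
    have hq := monge_quad_cols p q A hA i hi j1 j2 h hj1q
    linarith
end

section
/- Witness monotonicity in columns: let A be a p×q Monge matrix and B a q×r Monge matrix, and for each (i,k) let w(i,k) be the smallest index j ∈ [0..q) with A[i,j] + B[j,k] = min_{j'} (A[i,j'] + B[j',k]). Then for all i ∈ [0..p-1) and k ∈ [0..r), w(i,k) ≤ w(i+1,k). -/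
/-- Witness monotonicity in columns: the smallest-witness matrix of the
min-plus product of two Monge matrices is non-decreasing down each column. -/
theorem witness_monotone_columns (p q r : ℕ) (hq : 0 < q) (A B : ℕ → ℕ → ℝ)
    (hA : ∀ i j, i + 1 < p → j + 1 < q →
        A i j + A (i + 1) (j + 1) ≤ A i (j + 1) + A (i + 1) j)
    (hB : ∀ j k, j + 1 < q → k + 1 < r →
        B j k + B (j + 1) (k + 1) ≤ B j (k + 1) + B (j + 1) k)
    (w : ℕ → ℕ → ℕ)
    (hw : ∀ i k, i < p → k < r →
      IsLeast {j | j < q ∧ A i j + B j k =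
          (Finset.range q).inf' (Finset.nonempty_range_iff.mpr hq.ne')
            (fun j' => A i j' + B j' k)} (w i k)) :
    ∀ i k, i + 1 < p → k < r → w i k ≤ w (i + 1) k := by
  intro i k hi hk
  by_contra hlt
  push_neg at hlt
  obtain ⟨⟨hj1q, hj1eq⟩, hj1min⟩ := hw (i + 1) k hi hk
  obtain ⟨⟨hj2q, hj2eq⟩, hj2min⟩ := hw i k (by omega) hk
  set j1 := w (i + 1) k with hj1
  set j2 := w i k with hj2
  -- Monge rectangle inequality by telescoping
  have monge : ∀ j2', j1 < j2' → j2' < q →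
      A i j1 + A (i + 1) j2' ≤ A i j2' + A (i + 1) j1 := by
    intro j2'
    induction j2' with
    | zero => omega
    | succ n ih =>
      intro h1 h2
      rcases Nat.lt_or_ge j1 n with h | h
      · have h3 := ih h (by omega)
        have h4 := hA i n hi h2
        linarith
      · have hn : j1 = n := by omega
        subst hn
        have h4 := hA i j1 hi h2
        linarith
  have hle : A i j2 + B j2 k ≤ A i j1 + B j1 k := by
    rw [hj2eq]; exact Finset.inf'_le _ (Finset.mem_range.mpr hj1q)
  have hne : A i j1 + B j1 k ≠ A i j2 + B j2 k := by
    intro h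
    have : j2 ≤ j1 := hj2min ⟨hj1q, by rw [h, hj2eq]⟩
    omega
  have hstrict : A i j2 + B j2 k < A i j1 + B j1 k :=
    lt_of_le_of_ne hle fun h => hne h.symm
  have hM := monge j2 hlt hj2q
  have hmin2 : A (i + 1) j1 + B j1 k ≤ A (i + 1) j2 + B j2 k := by
    rw [hj1eq]; exact Finset.inf'_le _ (Finset.mem_range.mpr hj2q)
  linarith
end

section
/- Witness monotonicity in rows: let A be a p×q Monge matrix and B a q×r Monge matrix, and for each (i,k) let w(i,k) be the smallest index j ∈ [0..q) with A[i,j] + B[j,k] = min_{j'} (A[i,j'] + B[j',k]). Then for all i ∈ [0..p) and k ∈ [0..r-1), w(i,k) ≤ w(i,k+1). -/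
/-- Witness monotonicity in rows: the smallest-witness matrix of the
min-plus product of two Monge matrices is non-decreasing along each row. -/
theorem witness_monotone_rows (p q r : ℕ) (hq : 0 < q) (A B : ℕ → ℕ → ℝ)
    (hA : ∀ i j, i + 1 < p → j + 1 < q →
        A i j + A (i + 1) (j + 1) ≤ A i (j + 1) + A (i + 1) j)
    (hB : ∀ j k, j + 1 < q → k + 1 < r →
        B j k + B (j + 1) (k + 1) ≤ B j (k + 1) + B (j + 1) k)
    (w : ℕ → ℕ → ℕ)
    (hw : ∀ i k, i < p → k < r →
      IsLeast {j | j < q ∧ A i j + B j k =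
          (Finset.range q).inf' (Finset.nonempty_range_iff.mpr hq.ne')
            (fun j' => A i j' + B j' k)} (w i k)) :
    ∀ i k, i < p → k + 1 < r → w i k ≤ w i (k + 1) := by
  intro i k hi hk
  by_contra hcon
  push_neg at hcon
  set j1 := w i (k + 1) with hj1def
  set j2 := w i k with hj2def
  -- quadrangle inequality
  have quad : ∀ j2', j2' < q → ∀ j1', j1' ≤ j2' →
      B j1' k + B j2' (k + 1) ≤ B j1' (k + 1) + B j2' k := by
    intro j2'
    induction j2' with
    | zero =>
      intro _ j1' hj1'
      interval_cases j1'
      linarith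
    | succ n ih =>
      intro hn j1' hj1'
      rcases Nat.lt_succ_iff_lt_or_eq.mp (Nat.lt_succ_of_le hj1') with h | h
      · have h2 := hB n k hn hk
        have : j1' ≤ n := Nat.lt_succ_iff.mp h
        linarith [ih (Nat.lt_of_succ_lt hn) j1' this]
      · subst h; linarith
  have hwk := hw i k hi (Nat.lt_of_succ_lt hk)
  have hwk1 := hw i (k + 1) hi hk
  obtain ⟨⟨hj2q, hj2eq⟩, hj2lb⟩ := hwk
  obtain ⟨⟨hj1q, hj1eq⟩, hj1lb⟩ := hwk1
  -- min ≤ values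
  have hmem1 : j1 ∈ Finset.range q := Finset.mem_range.mpr hj1q
  have hmem2 : j2 ∈ Finset.range q := Finset.mem_range.mpr hj2q
  have h1 : A i j2 + B j2 k ≤ A i j1 + B j1 k := by
    rw [hj2eq]
    exact Finset.inf'_le _ hmem1
  have h2 : A i j1 + B j1 (k + 1) ≤ A i j2 + B j2 (k + 1) := by
    rw [hj1eq]
    exact Finset.inf'_le _ hmem2
  have hq2 := quad j2 hj2q j1 hcon.le
  -- then j1 is also a witness at k, contradicting minimality of j2
  have hle : A i j1 + B j1 k ≤ A i j2 + B j2 k := by linarith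
  have heq : A i j1 + B j1 k =
      (Finset.range q).inf' (Finset.nonempty_range_iff.mpr hq.ne')
        (fun j' => A i j' + B j' k) :=
    le_antisymm (by rw [← hj2eq]; exact hle) (Finset.inf'_le _ hmem1)
  have := hj2lb ⟨hj1q, heq⟩
  omega
end

section
/- Core sum preservation: let A be a p×q Monge matrix and B a q×r Monge matrix, and let C = A ⊗ B be their min-plus product. Then the core sum of C is at most the core sum of A: Σ_{i,k} C□[i,k] ≤ Σ_{i,j} A□[i,j]. -/
/-- Core sum preservation: for Monge matrices `A` (`p × q`) and `B` (`q × r`)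
and `C = A ⊗ B`, we have `δ^Σ(C) ≤ δ^Σ(A)`. -/
theorem core_sum_preservation_left (p q r : ℕ) (hp : 0 < p) (hq : 0 < q) (hr : 0 < r)
    (A B C : ℕ → ℕ → ℝ)
    (hA : ∀ i j, i + 1 < p → j + 1 < q →
        A i j + A (i + 1) (j + 1) ≤ A i (j + 1) + A (i + 1) j)
    (hB : ∀ j k, j + 1 < q → k + 1 < r →
        B j k + B (j + 1) (k + 1) ≤ B j (k + 1) + B (j + 1) k)
    (hC : ∀ i k, C i k =
        (Finset.range q).inf' (Finset.nonempty_range_iff.mpr hq.ne')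
          (fun j => A i j + B j k)) :
    ∑ i ∈ Finset.range (p - 1), ∑ k ∈ Finset.range (r - 1),
        (C i (k + 1) + C (i + 1) k - C i k - C (i + 1) (k + 1))
      ≤ ∑ i ∈ Finset.range (p - 1), ∑ j ∈ Finset.range (q - 1),
        (A i (j + 1) + A (i + 1) j - A i j - A (i + 1) (j + 1)) := by
  have hne : (Finset.range q).Nonempty := Finset.nonempty_range_iff.mpr hq.ne'
  -- rectangle Monge inequality for A, adjacent rows
  have col : ∀ i, i + 1 < p → ∀ c1 c2, c1 ≤ c2 → c2 < q →
      A i c1 + A (i+1) c2 ≤ A i c2 + A (i+1) c1 := by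
    intro i hi c1 c2 hle
    induction c2, hle using Nat.le_induction with
    | base => intro _; linarith
    | succ c2 hc2 ih =>
      intro hlt
      have h1 := ih (by omega)
      have h2 := hA i c2 hi (by omega)
      linarith
  -- full rectangle Monge inequality for A
  have rect : ∀ i1 i2 c1 c2, i1 ≤ i2 → i2 < p → c1 ≤ c2 → c2 < q →
      A i1 c1 + A i2 c2 ≤ A i1 c2 + A i2 c1 := by
    intro i1 i2 c1 c2 h12
    induction i2, h12 using Nat.le_induction with
    | base => intros; linarith
    | succ i2 hi2 ih =>
      intro hp2 hc hq2
      have h1 := ih (by omega) hc hq2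
      have h2 := col i2 hp2 c1 c2 hc hq2
      linarith
  -- telescoping of the density sum
  have tele : ∀ (M : ℕ → ℕ → ℝ) (m n : ℕ),
      ∑ i ∈ Finset.range m, ∑ k ∈ Finset.range n,
        (M i (k+1) + M (i+1) k - M i k - M (i+1) (k+1))
      = (M 0 n - M 0 0) - (M m n - M m 0) := by
    intro M m n
    have h1 : ∀ i, ∑ k ∈ Finset.range n,
        (M i (k+1) + M (i+1) k - M i k - M (i+1) (k+1))
        = (M i n - M i 0) - (M (i+1) n - M (i+1) 0) := by
      intro i
      have := Finset.sum_range_sub (f := fun k => M i k - M (i+1) k) n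
      calc ∑ k ∈ Finset.range n, (M i (k+1) + M (i+1) k - M i k - M (i+1) (k+1))
          = ∑ k ∈ Finset.range n,
              ((fun k => M i k - M (i+1) k) (k+1) - (fun k => M i k - M (i+1) k) k) :=
            Finset.sum_congr rfl (fun k _ => by ring)
        _ = (M i n - M (i+1) n) - (M i 0 - M (i+1) 0) := this
        _ = (M i n - M i 0) - (M (i+1) n - M (i+1) 0) := by ring
    calc ∑ i ∈ Finset.range m, ∑ k ∈ Finset.range n,
          (M i (k+1) + M (i+1) k - M i k - M (i+1) (k+1))
        = ∑ i ∈ Finset.range m,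
            ((fun i => M i n - M i 0) i - (fun i => M i n - M i 0) (i+1)) :=
          Finset.sum_congr rfl (fun i _ => h1 i)
      _ = (M 0 n - M 0 0) - (M m n - M m 0) :=
          Finset.sum_range_sub' (f := fun i => M i n - M i 0) m
  -- witnesses for the minima
  obtain ⟨j1, hj1m, hj1⟩ := Finset.exists_mem_eq_inf' hne (fun j => A 0 j + B j 0)
  obtain ⟨j2, hj2m, hj2⟩ := Finset.exists_mem_eq_inf' hne (fun j => A (p-1) j + B j (r-1))
  have hj1q : j1 < q := Finset.mem_range.mp hj1m
  have hj2q : j2 < q := Finset.mem_range.mp hj2m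
  have hC00 : C 0 0 = A 0 j1 + B j1 0 := by rw [hC 0 0]; exact hj1
  have hCpr : C (p-1) (r-1) = A (p-1) j2 + B j2 (r-1) := by rw [hC (p-1) (r-1)]; exact hj2
  have hb1 : C 0 (r-1) ≤ A 0 j2 + B j2 (r-1) := by
    rw [hC 0 (r-1)]
    exact Finset.inf'_le (fun j => A 0 j + B j (r-1)) hj2m
  have hb2 : C (p-1) 0 ≤ A (p-1) j1 + B j1 0 := by
    rw [hC (p-1) 0]
    exact Finset.inf'_le (fun j => A (p-1) j + B j 0) hj1m
  have hm1 : A 0 j2 + A (p-1) (q-1) ≤ A 0 (q-1) + A (p-1) j2 :=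
    rect 0 (p-1) j2 (q-1) (Nat.zero_le _) (by omega) (by omega) (by omega)
  have hm2 : A 0 0 + A (p-1) j1 ≤ A 0 j1 + A (p-1) 0 :=
    rect 0 (p-1) 0 j1 (Nat.zero_le _) (by omega) (Nat.zero_le _) hj1q
  rw [tele C (p-1) (r-1), tele A (p-1) (q-1)]
  linarith
end

section
/- Core sum preservation (second factor): let A be a p×q Monge matrix and B a q×r Monge matrix, and let C = A ⊗ B be their min-plus product. Then δ^Σ(C) ≤ δ^Σ(B), i.e., the sum of all entries of the density matrix of C is at most the sum of all entries of the density matrix of B. -/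
lemma telescope_density (M : ℕ → ℕ → ℝ) (n m : ℕ) :
    ∑ i ∈ Finset.range n, ∑ k ∈ Finset.range m,
        (M i (k + 1) + M (i + 1) k - M i k - M (i + 1) (k + 1))
      = M 0 m + M n 0 - M 0 0 - M n m := by
  have inner : ∀ i, ∑ k ∈ Finset.range m,
      (M i (k + 1) + M (i + 1) k - M i k - M (i + 1) (k + 1))
      = (M i m - M (i + 1) m) - (M i 0 - M (i + 1) 0) := by
    intro i
    have h := Finset.sum_range_sub (fun k => M i k - M (i + 1) k) m
    rw [← h]
    apply Finset.sum_congr rfl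
    intro k _; ring
  calc ∑ i ∈ Finset.range n, ∑ k ∈ Finset.range m,
        (M i (k + 1) + M (i + 1) k - M i k - M (i + 1) (k + 1))
      = ∑ i ∈ Finset.range n, ((M i m - M (i + 1) m) - (M i 0 - M (i + 1) 0)) :=
        Finset.sum_congr rfl (fun i _ => inner i)
    _ = ∑ i ∈ Finset.range n, ((fun i => M i m - M i 0) i - (fun i => M i m - M i 0) (i + 1)) :=
        Finset.sum_congr rfl (fun i _ => by ring)
    _ = (M 0 m - M 0 0) - (M n m - M n 0) :=
        Finset.sum_range_sub' (fun i => M i m - M i 0) n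
    _ = M 0 m + M n 0 - M 0 0 - M n m := by ring

lemma monge_col (q r : ℕ) (B : ℕ → ℕ → ℝ)
    (hB : ∀ j k, j + 1 < q → k + 1 < r →
        B j k + B (j + 1) (k + 1) ≤ B j (k + 1) + B (j + 1) k)
    (j : ℕ) (hj : j + 1 < q) :
    ∀ k k', k ≤ k' → k' < r → B j k + B (j + 1) k' ≤ B j k' + B (j + 1) k := by
  intro k k' hk hk'
  induction k', hk using Nat.le_induction with
  | base => linarith
  | succ n hn ih =>
    have h1 := hB j n hj (by omega)
    have h2 := ih (by omega)
    linarith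

lemma monge_rect (q r : ℕ) (B : ℕ → ℕ → ℝ)
    (hB : ∀ j k, j + 1 < q → k + 1 < r →
        B j k + B (j + 1) (k + 1) ≤ B j (k + 1) + B (j + 1) k)
    (j j' k k' : ℕ) (hjj : j ≤ j') (hkk : k ≤ k') (hj' : j' < q) (hk' : k' < r) :
    B j k + B j' k' ≤ B j k' + B j' k := by
  induction j', hjj using Nat.le_induction with
  | base => linarith
  | succ n hn ih =>
    have h1 := monge_col q r B hB n (by omega) k k' hkk hk'
    have h2 := ih (by omega)
    linarith

/-- Core sum preservation (second factor): for Monge matrices `A` (`p × q`)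
and `B` (`q × r`) and `C = A ⊗ B`, we have `δ^Σ(C) ≤ δ^Σ(B)`. -/
theorem core_sum_preservation_right (p q r : ℕ) (hp : 0 < p) (hq : 0 < q) (hr : 0 < r)
    (A B C : ℕ → ℕ → ℝ)
    (hA : ∀ i j, i + 1 < p → j + 1 < q →
        A i j + A (i + 1) (j + 1) ≤ A i (j + 1) + A (i + 1) j)
    (hB : ∀ j k, j + 1 < q → k + 1 < r →
        B j k + B (j + 1) (k + 1) ≤ B j (k + 1) + B (j + 1) k)
    (hC : ∀ i k, C i k =
        (Finset.range q).inf' (Finset.nonempty_range_iff.mpr hq.ne')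
          (fun j => A i j + B j k)) :
    ∑ i ∈ Finset.range (p - 1), ∑ k ∈ Finset.range (r - 1),
        (C i (k + 1) + C (i + 1) k - C i k - C (i + 1) (k + 1))
      ≤ ∑ j ∈ Finset.range (q - 1), ∑ k ∈ Finset.range (r - 1),
        (B j (k + 1) + B (j + 1) k - B j k - B (j + 1) (k + 1)) := by
  rw [telescope_density C (p - 1) (r - 1), telescope_density B (q - 1) (r - 1)]
  have hne : (Finset.range q).Nonempty := Finset.nonempty_range_iff.mpr hq.ne'
  -- minimizers for the two "negative" corners of C
  obtain ⟨j0, hj0, hj0e⟩ := Finset.exists_mem_eq_inf' hne (fun j => A 0 j + B j 0)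
  obtain ⟨j1, hj1, hj1e⟩ := Finset.exists_mem_eq_inf' hne (fun j => A (p - 1) j + B j (r - 1))
  rw [Finset.mem_range] at hj0 hj1
  have hC00 : C 0 0 = A 0 j0 + B j0 0 := by rw [hC]; exact hj0e
  have hC11 : C (p - 1) (r - 1) = A (p - 1) j1 + B j1 (r - 1) := by rw [hC]; exact hj1e
  have hC01 : C 0 (r - 1) ≤ A 0 j0 + B j0 (r - 1) := by
    rw [hC]; exact Finset.inf'_le _ (Finset.mem_range.mpr hj0)
  have hC10 : C (p - 1) 0 ≤ A (p - 1) j1 + B j1 0 := by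
    rw [hC]; exact Finset.inf'_le _ (Finset.mem_range.mpr hj1)
  have m1 : B 0 0 + B j0 (r - 1) ≤ B 0 (r - 1) + B j0 0 :=
    monge_rect q r B hB 0 j0 0 (r - 1) (Nat.zero_le _) (Nat.zero_le _) hj0 (by omega)
  have m2 : B j1 0 + B (q - 1) (r - 1) ≤ B j1 (r - 1) + B (q - 1) 0 :=
    monge_rect q r B hB j1 (q - 1) 0 (r - 1) (by omega) (Nat.zero_le _) (by omega) (by omega)
  linarith
end

section
/- Local core sum preservation: let A be a p×q Monge matrix, B a q×r Monge matrix, and C = A ⊗ B. Suppose C□[i,k] ≠ 0 for some i ∈ [0..p-1) and k ∈ [0..r-1). Then there exist indices j_A, j_B with w(i,k) ≤ j_A, j_B < w(i+1,k+1) such that A□[i,j_A] ≠ 0 and B□[j_B,k] ≠ 0, where w denotes the minimum-witness matrix of A ⊗ B. -/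
/-- Local core sum preservation: if `C□[i,k] ≠ 0` then there are witnesses
`j_A, j_B ∈ [w(i,k) .. w(i+1,k+1))` with `A□[i,j_A] ≠ 0` and `B□[j_B,k] ≠ 0`. -/
theorem local_core_sum_preservation (p q r : ℕ) (hq : 0 < q) (A B C : ℕ → ℕ → ℝ)
    (hA : ∀ i j, i + 1 < p → j + 1 < q →
        A i j + A (i + 1) (j + 1) ≤ A i (j + 1) + A (i + 1) j)
    (hB : ∀ j k, j + 1 < q → k + 1 < r →
        B j k + B (j + 1) (k + 1) ≤ B j (k + 1) + B (j + 1) k)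
    (hC : ∀ i k, C i k =
        (Finset.range q).inf' (Finset.nonempty_range_iff.mpr hq.ne')
          (fun j => A i j + B j k))
    (w : ℕ → ℕ → ℕ)
    (hw : ∀ i k, i < p → k < r →
      IsLeast {j | j < q ∧ A i j + B j k =
          (Finset.range q).inf' (Finset.nonempty_range_iff.mpr hq.ne')
            (fun j' => A i j' + B j' k)} (w i k))
    (i k : ℕ) (hi : i + 1 < p) (hk : k + 1 < r)
    (hne : C i (k + 1) + C (i + 1) k - C i k - C (i + 1) (k + 1) ≠ 0) :
    ∃ jA jB : ℕ,
      w i k ≤ jA ∧ jA < w (i + 1) (k + 1) ∧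
      w i k ≤ jB ∧ jB < w (i + 1) (k + 1) ∧
      A i (jA + 1) + A (i + 1) jA - A i jA - A (i + 1) (jA + 1) ≠ 0 ∧
      B jB (k + 1) + B (jB + 1) k - B jB k - B (jB + 1) (k + 1) ≠ 0 := by
  -- basic facts about C and w
  have hCle : ∀ i' k' j, j < q → C i' k' ≤ A i' j + B j k' := by
    intro i' k' j hj
    rw [hC]
    exact Finset.inf'_le _ (Finset.mem_range.mpr hj)
  have hwq : ∀ i' k', i' < p → k' < r → w i' k' < q :=
    fun i' k' hi' hk' => ((hw i' k' hi' hk').1).1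
  have hweq : ∀ i' k', i' < p → k' < r →
      A i' (w i' k') + B (w i' k') k' = C i' k' := by
    intro i' k' hi' hk'
    rw [hC]
    exact ((hw i' k' hi' hk').1).2
  have hwmin : ∀ i' k' j, i' < p → k' < r → j < q →
      A i' j + B j k' = C i' k' → w i' k' ≤ j := by
    intro i' k' j hi' hk' hj he
    exact (hw i' k' hi' hk').2 ⟨hj, by rw [← hC i' k']; exact he⟩
  have hip : i < p := Nat.lt_of_succ_lt hi
  have hkr : k < r := Nat.lt_of_succ_lt hk
  -- rectangle Monge inequality for A on rows i, i+1
  have hArect : ∀ j1 j2, j1 ≤ j2 → j2 < q →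
      A i j1 + A (i + 1) j2 ≤ A i j2 + A (i + 1) j1 := by
    intro j1 j2 h12 h2q
    induction j2 with
    | zero =>
      have : j1 = 0 := Nat.le_zero.mp h12
      subst this; linarith
    | succ n ih =>
      rcases Nat.lt_or_ge j1 (n + 1) with h | h
      · have h1n : j1 ≤ n := Nat.lt_succ_iff.mp h
        have h1 := ih h1n (Nat.lt_of_succ_lt h2q)
        have h2 := hA i n hi h2q
        linarith
      · have : j1 = n + 1 := le_antisymm h12 h
        subst this; linarith
  -- rectangle Monge inequality for B on columns k, k+1
  have hBrect : ∀ j1 j2, j1 ≤ j2 → j2 < q →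
      B j1 k + B j2 (k + 1) ≤ B j1 (k + 1) + B j2 k := by
    intro j1 j2 h12 h2q
    induction j2 with
    | zero =>
      have : j1 = 0 := Nat.le_zero.mp h12
      subst this; linarith
    | succ n ih =>
      rcases Nat.lt_or_ge j1 (n + 1) with h | h
      · have h1n : j1 ≤ n := Nat.lt_succ_iff.mp h
        have h1 := ih h1n (Nat.lt_of_succ_lt h2q)
        have h2 := hB n k h2q hk
        linarith
      · have : j1 = n + 1 := le_antisymm h12 h
        subst this; linarith
  -- witness monotonicity in rows: w i k' ≤ w (i+1) k'
  have hmonoRow : ∀ k', k' < r → w i k' ≤ w (i + 1) k' := by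
    intro k' hk'
    by_contra h
    push_neg at h
    set j' := w (i + 1) k'
    set j := w i k'
    have hj'q : j' < q := hwq _ _ hi hk'
    have hjq : j < q := hwq _ _ hip hk'
    have h1 : A (i + 1) j' + B j' k' = C (i + 1) k' := hweq _ _ hi hk'
    have h2 : C (i + 1) k' ≤ A (i + 1) j + B j k' := hCle _ _ j hjq
    have h3 : A i j' + A (i + 1) j ≤ A i j + A (i + 1) j' :=
      hArect j' j (le_of_lt h) hjq
    have h4 : A i j + B j k' = C i k' := hweq _ _ hip hk'
    have h5 : C i k' ≤ A i j' + B j' k' := hCle _ _ j' hj'q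
    have h6 : A i j' + B j' k' = C i k' := le_antisymm (by linarith) h5
    have := hwmin i k' j' hip hk' hj'q h6
    omega
  -- witness monotonicity in columns: w i' k ≤ w i' (k+1)
  have hmonoCol : ∀ i', i' < p → w i' k ≤ w i' (k + 1) := by
    intro i' hi'
    by_contra h
    push_neg at h
    set j' := w i' (k + 1)
    set j := w i' k
    have hj'q : j' < q := hwq _ _ hi' hk
    have hjq : j < q := hwq _ _ hi' hkr
    have h1 : A i' j' + B j' (k + 1) = C i' (k + 1) := hweq _ _ hi' hk
    have h2 : C i' (k + 1) ≤ A i' j + B j (k + 1) := hCle _ _ j hjq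
    have h3 : B j' k + B j (k + 1) ≤ B j' (k + 1) + B j k :=
      hBrect j' j (le_of_lt h) hjq
    have h4 : A i' j + B j k = C i' k := hweq _ _ hi' hkr
    have h5 : C i' k ≤ A i' j' + B j' k := hCle _ _ j' hj'q
    have h6 : A i' j' + B j' k = C i' k := le_antisymm (by linarith) h5
    have := hwmin i' k j' hi' hkr hj'q h6
    omega
  set a := w i k with ha
  set b := w (i + 1) (k + 1) with hb
  set jr := w i (k + 1) with hjr
  set jc := w (i + 1) k with hjc
  have haq : a < q := hwq _ _ hip hkr
  have hbq : b < q := hwq _ _ hi hk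
  have hjrq : jr < q := hwq _ _ hip hk
  have hjcq : jc < q := hwq _ _ hi hkr
  have hajr : a ≤ jr := hmonoCol i hip
  have hjrb : jr ≤ b := hmonoRow (k + 1) hk
  have hajc : a ≤ jc := hmonoRow k hkr
  have hjcb : jc ≤ b := hmonoCol (i + 1) hi
  have heqa : A i a + B a k = C i k := hweq _ _ hip hkr
  have heqb : A (i + 1) b + B b (k + 1) = C (i + 1) (k + 1) := hweq _ _ hi hk
  have heqjr : A i jr + B jr (k + 1) = C i (k + 1) := hweq _ _ hip hk
  have heqjc : A (i + 1) jc + B jc k = C (i + 1) k := hweq _ _ hi hkr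
  -- existence of jA
  have hexA : ∃ jA, a ≤ jA ∧ jA < b ∧
      A i (jA + 1) + A (i + 1) jA - A i jA - A (i + 1) (jA + 1) ≠ 0 := by
    by_contra h
    push_neg at h
    have hconst : ∀ j, a ≤ j → j ≤ b →
        A (i + 1) j - A i j = A (i + 1) a - A i a := by
      intro j hj
      induction j, hj using Nat.le_induction with
      | base => intro _; ring
      | succ n hn ih =>
        intro hnb
        have h1 := ih (by omega)
        have h2 := h n hn (by omega)
        linarith
    set d := A (i + 1) a - A i a with hd
    have hcb := hconst b (hajr.trans hjrb) (le_refl b)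
    have hcjr := hconst jr hajr hjrb
    have hcjc := hconst jc hajc hjcb
    -- C (i+1)(k+1) = C i (k+1) + d
    have le1 : C (i + 1) (k + 1) ≤ C i (k + 1) + d := by
      have := hCle (i + 1) (k + 1) jr hjrq
      linarith
    have ge1 : C i (k + 1) + d ≤ C (i + 1) (k + 1) := by
      have := hCle i (k + 1) b hbq
      linarith
    -- C (i+1) k = C i k + d
    have le2 : C (i + 1) k ≤ C i k + d := by
      have := hCle (i + 1) k a haq
      linarith
    have ge2 : C i k + d ≤ C (i + 1) k := by
      have := hCle i k jc hjcq
      linarith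
    apply hne
    linarith
  -- existence of jB
  have hexB : ∃ jB, a ≤ jB ∧ jB < b ∧
      B jB (k + 1) + B (jB + 1) k - B jB k - B (jB + 1) (k + 1) ≠ 0 := by
    by_contra h
    push_neg at h
    have hconst : ∀ j, a ≤ j → j ≤ b →
        B j (k + 1) - B j k = B a (k + 1) - B a k := by
      intro j hj
      induction j, hj using Nat.le_induction with
      | base => intro _; ring
      | succ n hn ih =>
        intro hnb
        have h1 := ih (by omega)
        have h2 := h n hn (by omega)
        linarith
    set d := B a (k + 1) - B a k with hd
    have hcb := hconst b (hajr.trans hjrb) (le_refl b)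
    have hcjr := hconst jr hajr hjrb
    have hcjc := hconst jc hajc hjcb
    -- C i (k+1) = C i k + d
    have le1 : C i (k + 1) ≤ C i k + d := by
      have := hCle i (k + 1) a haq
      linarith
    have ge1 : C i k + d ≤ C i (k + 1) := by
      have := hCle i k jr hjrq
      linarith
    -- C (i+1)(k+1) = C (i+1) k + d
    have le2 : C (i + 1) (k + 1) ≤ C (i + 1) k + d := by
      have := hCle (i + 1) (k + 1) jc hjcq
      linarith
    have ge2 : C (i + 1) k + d ≤ C (i + 1) (k + 1) := by
      have := hCle (i + 1) k b hbq
      linarith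
    apply hne
    linarith
  obtain ⟨jA, h1, h2, h3⟩ := hexA
  obtain ⟨jB, h4, h5, h6⟩ := hexB
  exact ⟨jA, jB, h1, h2, h4, h5, h3, h6⟩
end

section
/- Core size preservation: let A be a p×q Monge matrix and B a q×r Monge matrix, and let C = A ⊗ B. Then the number of nonzero entries of the density matrix of C is at most twice the sum of the numbers of nonzero entries of the density matrices of A and B: δ(C) ≤ 2·(δ(A) + δ(B)). -/
/-- Core size preservation: for Monge matrices `A` (`p × q`) and `B`
(`q × r`) and `C = A ⊗ B`, we have `δ(C) ≤ 2 · (δ(A) + δ(B))`. -/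
theorem core_size_preservation (p q r : ℕ) (hq : 0 < q) (A B C : ℕ → ℕ → ℝ)
    (hA : ∀ i j, i + 1 < p → j + 1 < q →
        A i j + A (i + 1) (j + 1) ≤ A i (j + 1) + A (i + 1) j)
    (hB : ∀ j k, j + 1 < q → k + 1 < r →
        B j k + B (j + 1) (k + 1) ≤ B j (k + 1) + B (j + 1) k)
    (hC : ∀ i k, C i k =
        (Finset.range q).inf' (Finset.nonempty_range_iff.mpr hq.ne')
          (fun j => A i j + B j k)) :
    ((Finset.range (p - 1) ×ˢ Finset.range (r - 1)).filter
        (fun x => C x.1 (x.2 + 1) + C (x.1 + 1) x.2 - C x.1 x.2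
          - C (x.1 + 1) (x.2 + 1) ≠ 0)).card
      ≤ 2 * (((Finset.range (p - 1) ×ˢ Finset.range (q - 1)).filter
            (fun x => A x.1 (x.2 + 1) + A (x.1 + 1) x.2 - A x.1 x.2
              - A (x.1 + 1) (x.2 + 1) ≠ 0)).card
          + ((Finset.range (q - 1) ×ˢ Finset.range (r - 1)).filter
            (fun x => B x.1 (x.2 + 1) + B (x.1 + 1) x.2 - B x.1 x.2
              - B (x.1 + 1) (x.2 + 1) ≠ 0)).card) := by
  classical
  set Z := (Finset.range (p - 1) ×ˢ Finset.range (r - 1)).filter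
      (fun x => C x.1 (x.2 + 1) + C (x.1 + 1) x.2 - C x.1 x.2
        - C (x.1 + 1) (x.2 + 1) ≠ 0) with hZdef
  set SA := (Finset.range (p - 1) ×ˢ Finset.range (q - 1)).filter
      (fun x => A x.1 (x.2 + 1) + A (x.1 + 1) x.2 - A x.1 x.2
        - A (x.1 + 1) (x.2 + 1) ≠ 0) with hSAdef
  set SB := (Finset.range (q - 1) ×ˢ Finset.range (r - 1)).filter
      (fun x => B x.1 (x.2 + 1) + B (x.1 + 1) x.2 - B x.1 x.2
        - B (x.1 + 1) (x.2 + 1) ≠ 0) with hSBdef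
  have hqne : (Finset.range q).Nonempty := Finset.nonempty_range_iff.mpr hq.ne'
  set T : ℕ → ℕ → Finset ℕ := fun i k =>
    (Finset.range q).filter (fun j => A i j + B j k = C i k) with hTdef
  have hTne : ∀ i k, (T i k).Nonempty := by
    intro i k
    obtain ⟨j, hj, hje⟩ := Finset.exists_mem_eq_inf' hqne (fun j => A i j + B j k)
    refine ⟨j, ?_⟩
    rw [hTdef]
    simp only [Finset.mem_filter]
    exact ⟨hj, by rw [hC i k]; exact hje.symm⟩
  set jmin : ℕ → ℕ → ℕ := fun i k => (T i k).min' (hTne i k) with hjmindef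
  set jmax : ℕ → ℕ → ℕ := fun i k => (T i k).max' (hTne i k) with hjmaxdef
  have hTspec : ∀ i k j, j ∈ T i k → j < q ∧ A i j + B j k = C i k := by
    intro i k j hj
    rw [hTdef] at hj
    simpa only [Finset.mem_filter, Finset.mem_range] using hj
  have hminmem : ∀ i k, jmin i k ∈ T i k := fun i k => (T i k).min'_mem _
  have hmaxmem : ∀ i k, jmax i k ∈ T i k := fun i k => (T i k).max'_mem _
  have hminq : ∀ i k, jmin i k < q := fun i k => (hTspec _ _ _ (hminmem i k)).1
  have hmaxq : ∀ i k, jmax i k < q := fun i k => (hTspec _ _ _ (hmaxmem i k)).1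
  have hmineq : ∀ i k, A i (jmin i k) + B (jmin i k) k = C i k :=
    fun i k => (hTspec _ _ _ (hminmem i k)).2
  have hmaxeq : ∀ i k, A i (jmax i k) + B (jmax i k) k = C i k :=
    fun i k => (hTspec _ _ _ (hmaxmem i k)).2
  have hminle : ∀ i k, jmin i k ≤ jmax i k :=
    fun i k => Finset.min'_le _ _ (hmaxmem i k)
  have hminLE : ∀ i k j, j ∈ T i k → jmin i k ≤ j :=
    fun i k j hj => Finset.min'_le _ _ hj
  have hmaxGE : ∀ i k j, j ∈ T i k → j ≤ jmax i k :=
    fun i k j hj => Finset.le_max' _ _ hj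
  have hCle : ∀ i k j, j < q → C i k ≤ A i j + B j k := by
    intro i k j hj
    rw [hC i k]
    exact Finset.inf'_le _ (Finset.mem_range.mpr hj)
  have hmemT : ∀ i k j, j < q → A i j + B j k = C i k → j ∈ T i k := by
    intro i k j hj he
    rw [hTdef]
    simp only [Finset.mem_filter, Finset.mem_range]
    exact ⟨hj, he⟩
  have hstrictmin : ∀ i k j, j < q → j < jmin i k → C i k < A i j + B j k := by
    intro i k j hj hlt
    rcases lt_or_eq_of_le (hCle i k j hj) with h | h
    · exact h
    · exact absurd (hminLE i k j (hmemT i k j hj h.symm)) (by omega)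
  have hstrictmax : ∀ i k j, j < q → jmax i k < j → C i k < A i j + B j k := by
    intro i k j hj hlt
    rcases lt_or_eq_of_le (hCle i k j hj) with h | h
    · exact h
    · exact absurd (hmaxGE i k j (hmemT i k j hj h.symm)) (by omega)
  -- rectangle Monge inequalities
  have hAm : ∀ i b a, i + 1 < p → b ≤ a → a < q →
      A i b + A (i + 1) a ≤ A i a + A (i + 1) b := by
    intro i b a hip hba
    induction a, hba using Nat.le_induction with
    | base => intro _; exact le_rfl
    | succ n hbn ih =>
      intro hn1
      have h1 := ih (by omega)
      have h2 := hA i n hip (by omega)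
      linarith
  have hBm : ∀ k b a, k + 1 < r → b ≤ a → a < q →
      B b k + B a (k + 1) ≤ B b (k + 1) + B a k := by
    intro k b a hkr hba
    induction a, hba using Nat.le_induction with
    | base => intro _; exact le_of_eq (by ring)
    | succ n hbn ih =>
      intro hn1
      have h1 := ih (by omega)
      have h2 := hB n k (by omega) hkr
      linarith
  -- monotonicity of minimizers
  have hminrow : ∀ i k, i + 1 < p → jmin i k ≤ jmin (i + 1) k := by
    intro i k hip
    by_contra hcon
    push_neg at hcon
    have ha := hstrictmin i k (jmin (i + 1) k) (hminq _ _) hcon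
    have hb := hmineq (i + 1) k
    have hc := hCle (i + 1) k (jmin i k) (hminq i k)
    have hd := hmineq i k
    have hrect := hAm i (jmin (i + 1) k) (jmin i k) hip (le_of_lt hcon) (hminq i k)
    linarith
  have hmaxrow : ∀ i k, i + 1 < p → jmax i k ≤ jmax (i + 1) k := by
    intro i k hip
    by_contra hcon
    push_neg at hcon
    have ha := hstrictmax (i + 1) k (jmax i k) (hmaxq i k) hcon
    have hb := hmaxeq (i + 1) k
    have hc := hCle i k (jmax (i + 1) k) (hmaxq (i + 1) k)
    have hd := hmaxeq i k
    have hrect := hAm i (jmax (i + 1) k) (jmax i k) hip (le_of_lt hcon) (hmaxq i k)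
    linarith
  have hmincol : ∀ i k, k + 1 < r → jmin i k ≤ jmin i (k + 1) := by
    intro i k hkr
    by_contra hcon
    push_neg at hcon
    have ha := hstrictmin i k (jmin i (k + 1)) (hminq _ _) hcon
    have hb := hmineq i (k + 1)
    have hc := hCle i (k + 1) (jmin i k) (hminq i k)
    have hd := hmineq i k
    have hrect := hBm k (jmin i (k + 1)) (jmin i k) hkr (le_of_lt hcon) (hminq i k)
    linarith
  have hmaxcol : ∀ i k, k + 1 < r → jmax i k ≤ jmax i (k + 1) := by
    intro i k hkr
    by_contra hcon
    push_neg at hcon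
    have ha := hstrictmax i (k + 1) (jmax i k) (hmaxq i k) hcon
    have hb := hmaxeq i (k + 1)
    have hc := hCle i k (jmax i (k + 1)) (hmaxq i (k + 1))
    have hd := hmaxeq i k
    have hrect := hBm k (jmax i (k + 1)) (jmax i k) hkr (le_of_lt hcon) (hmaxq i k)
    linarith
  -- chains
  have hminrowChain : ∀ k i i', i ≤ i' → i' < p → jmin i k ≤ jmin i' k := by
    intro k i i' hii
    induction i', hii using Nat.le_induction with
    | base => intro _; exact le_rfl
    | succ n hn ih =>
      intro hnp
      exact le_trans (ih (by omega)) (hminrow n k hnp)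
  have hmaxrowChain : ∀ k i i', i ≤ i' → i' < p → jmax i k ≤ jmax i' k := by
    intro k i i' hii
    induction i', hii using Nat.le_induction with
    | base => intro _; exact le_rfl
    | succ n hn ih =>
      intro hnp
      exact le_trans (ih (by omega)) (hmaxrow n k hnp)
  have hmincolChain : ∀ i k k', k ≤ k' → k' < r → jmin i k ≤ jmin i k' := by
    intro i k k' hkk
    induction k', hkk using Nat.le_induction with
    | base => intro _; exact le_rfl
    | succ n hn ih =>
      intro hnr
      exact le_trans (ih (by omega)) (hmincol i n hnr)
  have hmaxcolChain : ∀ i k k', k ≤ k' → k' < r → jmax i k ≤ jmax i k' := by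
    intro i k k' hkk
    induction k', hkk using Nat.le_induction with
    | base => intro _; exact le_rfl
    | succ n hn ih =>
      intro hnr
      exact le_trans (ih (by omega)) (hmaxcol i n hnr)
  -- C is Monge
  have hCmonge : ∀ i k, i + 1 < p → k + 1 < r →
      0 ≤ C i (k + 1) + C (i + 1) k - C i k - C (i + 1) (k + 1) := by
    intro i k hip hkr
    have hueq := hmineq i (k + 1)
    have hveq := hmineq (i + 1) k
    rcases le_total (jmin i (k + 1)) (jmin (i + 1) k) with huv | hvu
    · have h1 := hCle i k (jmin i (k + 1)) (hminq i (k + 1))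
      have h2 := hCle (i + 1) (k + 1) (jmin (i + 1) k) (hminq (i + 1) k)
      have hrect := hBm k (jmin i (k + 1)) (jmin (i + 1) k) hkr huv (hminq (i + 1) k)
      linarith
    · have h1 := hCle i k (jmin (i + 1) k) (hminq (i + 1) k)
      have h2 := hCle (i + 1) (k + 1) (jmin i (k + 1)) (hminq i (k + 1))
      have hrect := hAm i (jmin (i + 1) k) (jmin i (k + 1)) hip hvu (hminq i (k + 1))
      linarith
  -- membership facts for Z
  have hZmem : ∀ i k, (i, k) ∈ Z → i + 1 < p ∧ k + 1 < r ∧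
      C i (k + 1) + C (i + 1) k - C i k - C (i + 1) (k + 1) ≠ 0 := by
    intro i k hz
    rw [hZdef, Finset.mem_filter, Finset.mem_product] at hz
    obtain ⟨⟨h1, h2⟩, h3⟩ := hz
    rw [Finset.mem_range] at h1 h2
    exact ⟨by omega, by omega, h3⟩
  -- strict diagonal gap at nonzero entries of the density of C
  have hxy : ∀ i k, (i, k) ∈ Z → jmax i k < jmin (i + 1) (k + 1) := by
    intro i k hz
    obtain ⟨hip, hkr, hne⟩ := hZmem i k hz
    by_contra hcon
    push_neg at hcon
    have hxeq := hmaxeq i k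
    have hyeq := hmineq (i + 1) (k + 1)
    have h1 := hCle i (k + 1) (jmax i k) (hmaxq i k)
    have h2 := hCle (i + 1) k (jmin (i + 1) (k + 1)) (hminq (i + 1) (k + 1))
    have hrect := hBm k (jmin (i + 1) (k + 1)) (jmax i k) hkr hcon (hmaxq i k)
    have hge := hCmonge i k hip hkr
    exact hne (le_antisymm (by linarith) hge)
  -- witness existence in A
  have hWitA : ∀ i k, (i, k) ∈ Z → ∃ t, jmax i k ≤ t ∧ t < jmin (i + 1) (k + 1) ∧
      A i (t + 1) + A (i + 1) t - A i t - A (i + 1) (t + 1) ≠ 0 := by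
    intro i k hz
    obtain ⟨hip, hkr, hne⟩ := hZmem i k hz
    have hxylt := hxy i k hz
    by_contra hcon
    push_neg at hcon
    have hconst : ∀ m, jmax i k ≤ m → m ≤ jmin (i + 1) (k + 1) →
        A i (jmax i k) + A (i + 1) m = A i m + A (i + 1) (jmax i k) := by
      intro m hm
      induction m, hm using Nat.le_induction with
      | base => intro _; ring
      | succ n hn ih =>
        intro hn1
        have h1 := ih (by omega)
        have h2 := hcon n hn (by omega)
        linarith
    have hkey := hconst (jmin (i + 1) (k + 1)) (le_of_lt hxylt) le_rfl
    have hxeq := hmaxeq i k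
    have hyeq := hmineq (i + 1) (k + 1)
    have h1 := hCle i (k + 1) (jmin (i + 1) (k + 1)) (hminq (i + 1) (k + 1))
    have h2 := hCle (i + 1) k (jmax i k) (hmaxq i k)
    have hge := hCmonge i k hip hkr
    exact hne (le_antisymm (by linarith) hge)
  -- witness existence in B
  have hWitB : ∀ i k, (i, k) ∈ Z → ∃ s, jmax i k ≤ s ∧ s < jmin (i + 1) (k + 1) ∧
      B s (k + 1) + B (s + 1) k - B s k - B (s + 1) (k + 1) ≠ 0 := by
    intro i k hz
    obtain ⟨hip, hkr, hne⟩ := hZmem i k hz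
    have hxylt := hxy i k hz
    by_contra hcon
    push_neg at hcon
    have hconst : ∀ m, jmax i k ≤ m → m ≤ jmin (i + 1) (k + 1) →
        B (jmax i k) (k + 1) + B m k = B (jmax i k) k + B m (k + 1) := by
      intro m hm
      induction m, hm using Nat.le_induction with
      | base => intro _; ring
      | succ n hn ih =>
        intro hn1
        have h1 := ih (by omega)
        have h2 := hcon n hn (by omega)
        linarith
    have hkey := hconst (jmin (i + 1) (k + 1)) (le_of_lt hxylt) le_rfl
    have hxeq := hmaxeq i k
    have hyeq := hmineq (i + 1) (k + 1)
    have h1 := hCle i (k + 1) (jmax i k) (hmaxq i k)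
    have h2 := hCle (i + 1) k (jmin (i + 1) (k + 1)) (hminq (i + 1) (k + 1))
    have hge := hCmonge i k hip hkr
    exact hne (le_antisymm (by linarith) hge)
  -- charging conditions
  set condA : ℕ × ℕ → ℕ → Prop := fun z t =>
    jmax z.1 z.2 ≤ t ∧ t < jmin (z.1 + 1) (z.2 + 1) ∧
    (A z.1 (t + 1) + A (z.1 + 1) t - A z.1 t - A (z.1 + 1) (t + 1) ≠ 0) ∧
    (jmin (z.1 + 1) z.2 ≤ t ∨ jmin (z.1 + 1) z.2 < jmin z.1 (z.2 + 1)) with hcondAdef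
  set condB : ℕ × ℕ → ℕ → Prop := fun z s =>
    jmax z.1 z.2 ≤ s ∧ s < jmin (z.1 + 1) (z.2 + 1) ∧
    (B s (z.2 + 1) + B (s + 1) z.2 - B s z.2 - B (s + 1) (z.2 + 1) ≠ 0) ∧
    (jmin z.1 (z.2 + 1) ≤ s ∨ jmin z.1 (z.2 + 1) ≤ jmin (z.1 + 1) z.2) with hcondBdef
  have hcondAspec : ∀ i k t, condA (i, k) t ↔
      (jmax i k ≤ t ∧ t < jmin (i + 1) (k + 1) ∧
      (A i (t + 1) + A (i + 1) t - A i t - A (i + 1) (t + 1) ≠ 0) ∧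
      (jmin (i + 1) k ≤ t ∨ jmin (i + 1) k < jmin i (k + 1))) :=
    fun i k t => Iff.rfl
  have hcondBspec : ∀ i k s, condB (i, k) s ↔
      (jmax i k ≤ s ∧ s < jmin (i + 1) (k + 1) ∧
      (B s (k + 1) + B (s + 1) k - B s k - B (s + 1) (k + 1) ≠ 0) ∧
      (jmin i (k + 1) ≤ s ∨ jmin i (k + 1) ≤ jmin (i + 1) k)) :=
    fun i k s => Iff.rfl
  have htotal : ∀ z ∈ Z, (∃ t, condA z t) ∨ (∃ s, condB z s) := by
    rintro ⟨i, k⟩ hz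
    rcases lt_or_ge (jmin (i + 1) k) (jmin i (k + 1)) with h | h
    · obtain ⟨t, h1, h2, h3⟩ := hWitA i k hz
      exact Or.inl ⟨t, (hcondAspec i k t).mpr ⟨h1, h2, h3, Or.inr h⟩⟩
    · obtain ⟨s, h1, h2, h3⟩ := hWitB i k hz
      exact Or.inr ⟨s, (hcondBspec i k s).mpr ⟨h1, h2, h3, Or.inr h⟩⟩
  set φ : ℕ × ℕ → (ℕ × ℕ) ⊕ (ℕ × ℕ) := fun z =>
    if h : ∃ t, condA z t then Sum.inl (z.1, h.choose)
    else if h' : ∃ s, condB z s then Sum.inr (h'.choose, z.2)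
    else Sum.inr (0, z.2) with hφdef
  have hφ1 : ∀ z (h : ∃ t, condA z t), φ z = Sum.inl (z.1, h.choose) := by
    intro z h
    simp only [hφdef]
    rw [dif_pos h]
  have hφ2 : ∀ z (h : ¬ ∃ t, condA z t) (h' : ∃ s, condB z s),
      φ z = Sum.inr (h'.choose, z.2) := by
    intro z h h'
    simp only [hφdef]
    rw [dif_neg h, dif_pos h']
  have hφA : ∀ a b i t, (a, b) ∈ Z → φ (a, b) = Sum.inl (i, t) →
      a = i ∧ condA (a, b) t := by
    intro a b i t hz heq
    by_cases h : ∃ t', condA (a, b) t'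
    · rw [hφ1 (a, b) h] at heq
      simp only [Sum.inl.injEq, Prod.mk.injEq] at heq
      exact ⟨heq.1, heq.2 ▸ h.choose_spec⟩
    · have h' : ∃ s, condB (a, b) s := (htotal (a, b) hz).resolve_left h
      rw [hφ2 (a, b) h h'] at heq
      simp at heq
  have hφB : ∀ a b s k, (a, b) ∈ Z → φ (a, b) = Sum.inr (s, k) →
      b = k ∧ condB (a, b) s := by
    intro a b s k hz heq
    by_cases h : ∃ t', condA (a, b) t'
    · rw [hφ1 (a, b) h] at heq
      simp at heq
    · have h' : ∃ s', condB (a, b) s' := (htotal (a, b) hz).resolve_left h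
      rw [hφ2 (a, b) h h'] at heq
      simp only [Sum.inr.injEq, Prod.mk.injEq] at heq
      exact ⟨heq.2, heq.1 ▸ h'.choose_spec⟩
  have hmaps : ∀ z ∈ Z, φ z ∈ SA.disjSum SB := by
    rintro ⟨i, k⟩ hz
    obtain ⟨hip, hkr, _⟩ := hZmem i k hz
    cases hval : φ (i, k) with
    | inl it =>
      obtain ⟨i', t'⟩ := it
      obtain ⟨h1, hcA⟩ := hφA i k i' t' hz hval
      obtain ⟨c1, c2, c3, _⟩ := (hcondAspec i k t').mp hcA
      have hyq := hminq (i + 1) (k + 1)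
      simp only [Finset.inl_mem_disjSum, hSAdef, Finset.mem_filter, Finset.mem_product,
        Finset.mem_range]
      refine ⟨⟨?_, ?_⟩, ?_⟩
      · omega
      · omega
      · rw [← h1]; exact c3
    | inr sk =>
      obtain ⟨s', k'⟩ := sk
      obtain ⟨h1, hcB⟩ := hφB i k s' k' hz hval
      obtain ⟨c1, c2, c3, _⟩ := (hcondBspec i k s').mp hcB
      have hyq := hminq (i + 1) (k + 1)
      simp only [Finset.inr_mem_disjSum, hSBdef, Finset.mem_filter, Finset.mem_product,
        Finset.mem_range]
      refine ⟨⟨?_, ?_⟩, ?_⟩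
      · omega
      · omega
      · rw [← h1]; exact c3
  have hfib : ∀ w ∈ SA.disjSum SB, (Z.filter fun z => φ z = w).card ≤ 2 := by
    intro w hw
    by_contra hcon
    push_neg at hcon
    rw [Finset.two_lt_card_iff] at hcon
    obtain ⟨z1, z2, z3, hz1, hz2, hz3, h12, h13, h23⟩ := hcon
    rw [Finset.mem_filter] at hz1 hz2 hz3
    obtain ⟨a1, k1⟩ := z1
    obtain ⟨a2, k2⟩ := z2
    obtain ⟨a3, k3⟩ := z3
    cases w with
    | inl it =>
      obtain ⟨i, t⟩ := it
      obtain ⟨e1, c1⟩ := hφA a1 k1 i t hz1.1 hz1.2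
      obtain ⟨e2, c2⟩ := hφA a2 k2 i t hz2.1 hz2.2
      obtain ⟨e3, c3⟩ := hφA a3 k3 i t hz3.1 hz3.2
      have m1 : (i, k1) ∈ Z := by rw [← e1]; exact hz1.1
      have m2 : (i, k2) ∈ Z := by rw [← e2]; exact hz2.1
      have m3 : (i, k3) ∈ Z := by rw [← e3]; exact hz3.1
      have d1 : condA (i, k1) t := by rw [← e1]; exact c1
      have d2 : condA (i, k2) t := by rw [← e2]; exact c2
      have d3 : condA (i, k3) t := by rw [← e3]; exact c3
      have hk12 : k1 ≠ k2 := by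
        intro h; apply h12; rw [e1.trans e2.symm, h]
      have hk13 : k1 ≠ k3 := by
        intro h; apply h13; rw [e1.trans e3.symm, h]
      have hk23 : k2 ≠ k3 := by
        intro h; apply h23; rw [e2.trans e3.symm, h]
      have H3 : ∀ b1 b2 b3, b1 < b2 → b2 < b3 →
          (i, b1) ∈ Z → (i, b2) ∈ Z → (i, b3) ∈ Z →
          condA (i, b1) t → condA (i, b2) t → condA (i, b3) t → False := by
        intro b1 b2 b3 hb12 hb23 mm1 mm2 mm3 dd1 dd2 dd3
        obtain ⟨hip1, hkr1, _⟩ := hZmem _ _ mm1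
        obtain ⟨hip2, hkr2, _⟩ := hZmem _ _ mm2
        obtain ⟨hip3, hkr3, _⟩ := hZmem _ _ mm3
        obtain ⟨d1a, d1b, _, _⟩ := (hcondAspec i b1 t).mp dd1
        obtain ⟨d2a, d2b, _, d2d⟩ := (hcondAspec i b2 t).mp dd2
        obtain ⟨d3a, _, _, _⟩ := (hcondAspec i b3 t).mp dd3
        have f1 : t < jmin (i + 1) b2 :=
          lt_of_lt_of_le d1b (hmincolChain (i + 1) (b1 + 1) b2 (by omega) (by omega))
        have f2 : jmin (i + 1) b2 < jmin i (b2 + 1) := by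
          rcases d2d with h | h
          · omega
          · exact h
        have f3 : jmin i (b2 + 1) ≤ jmax i (b2 + 1) := hminle i (b2 + 1)
        have f4 : jmax i (b2 + 1) ≤ jmax i b3 :=
          hmaxcolChain i (b2 + 1) b3 (by omega) (by omega)
        omega
      rcases lt_trichotomy k1 k2 with o1 | o1 | o1
      · rcases lt_trichotomy k2 k3 with o2 | o2 | o2
        · exact H3 k1 k2 k3 o1 o2 m1 m2 m3 d1 d2 d3
        · exact hk23 o2
        · rcases lt_trichotomy k1 k3 with o3 | o3 | o3
          · exact H3 k1 k3 k2 o3 o2 m1 m3 m2 d1 d3 d2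
          · exact hk13 o3
          · exact H3 k3 k1 k2 o3 o1 m3 m1 m2 d3 d1 d2
      · exact hk12 o1
      · rcases lt_trichotomy k1 k3 with o2 | o2 | o2
        · exact H3 k2 k1 k3 o1 o2 m2 m1 m3 d2 d1 d3
        · exact hk13 o2
        · rcases lt_trichotomy k2 k3 with o3 | o3 | o3
          · exact H3 k2 k3 k1 o3 o2 m2 m3 m1 d2 d3 d1
          · exact hk23 o3
          · exact H3 k3 k2 k1 o3 o1 m3 m2 m1 d3 d2 d1
    | inr sk =>
      obtain ⟨s, k⟩ := sk
      obtain ⟨e1, c1⟩ := hφB a1 k1 s k hz1.1 hz1.2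
      obtain ⟨e2, c2⟩ := hφB a2 k2 s k hz2.1 hz2.2
      obtain ⟨e3, c3⟩ := hφB a3 k3 s k hz3.1 hz3.2
      have m1 : (a1, k) ∈ Z := by rw [← e1]; exact hz1.1
      have m2 : (a2, k) ∈ Z := by rw [← e2]; exact hz2.1
      have m3 : (a3, k) ∈ Z := by rw [← e3]; exact hz3.1
      have d1 : condB (a1, k) s := by rw [← e1]; exact c1
      have d2 : condB (a2, k) s := by rw [← e2]; exact c2
      have d3 : condB (a3, k) s := by rw [← e3]; exact c3
      have hi12 : a1 ≠ a2 := by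
        intro h; apply h12; rw [e1.trans e2.symm, h]
      have hi13 : a1 ≠ a3 := by
        intro h; apply h13; rw [e1.trans e3.symm, h]
      have hi23 : a2 ≠ a3 := by
        intro h; apply h23; rw [e2.trans e3.symm, h]
      have H3 : ∀ b1 b2 b3, b1 < b2 → b2 < b3 →
          (b1, k) ∈ Z → (b2, k) ∈ Z → (b3, k) ∈ Z →
          condB (b1, k) s → condB (b2, k) s → condB (b3, k) s → False := by
        intro b1 b2 b3 hb12 hb23 mm1 mm2 mm3 dd1 dd2 dd3
        obtain ⟨hip1, hkr1, _⟩ := hZmem _ _ mm1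
        obtain ⟨hip2, hkr2, _⟩ := hZmem _ _ mm2
        obtain ⟨hip3, hkr3, _⟩ := hZmem _ _ mm3
        obtain ⟨d1a, d1b, _, _⟩ := (hcondBspec b1 k s).mp dd1
        obtain ⟨d2a, d2b, _, d2d⟩ := (hcondBspec b2 k s).mp dd2
        obtain ⟨d3a, _, _, _⟩ := (hcondBspec b3 k s).mp dd3
        have f1 : s < jmin b2 (k + 1) :=
          lt_of_lt_of_le d1b (hminrowChain (k + 1) (b1 + 1) b2 (by omega) (by omega))
        have f2 : jmin b2 (k + 1) ≤ jmin (b2 + 1) k := by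
          rcases d2d with h | h
          · omega
          · exact h
        have f3 : jmin (b2 + 1) k ≤ jmax (b2 + 1) k := hminle (b2 + 1) k
        have f4 : jmax (b2 + 1) k ≤ jmax b3 k :=
          hmaxrowChain k (b2 + 1) b3 (by omega) (by omega)
        omega
      rcases lt_trichotomy a1 a2 with o1 | o1 | o1
      · rcases lt_trichotomy a2 a3 with o2 | o2 | o2
        · exact H3 a1 a2 a3 o1 o2 m1 m2 m3 d1 d2 d3
        · exact hi23 o2
        · rcases lt_trichotomy a1 a3 with o3 | o3 | o3
          · exact H3 a1 a3 a2 o3 o2 m1 m3 m2 d1 d3 d2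
          · exact hi13 o3
          · exact H3 a3 a1 a2 o3 o1 m3 m1 m2 d3 d1 d2
      · exact hi12 o1
      · rcases lt_trichotomy a1 a3 with o2 | o2 | o2
        · exact H3 a2 a1 a3 o1 o2 m2 m1 m3 d2 d1 d3
        · exact hi13 o2
        · rcases lt_trichotomy a2 a3 with o3 | o3 | o3
          · exact H3 a2 a3 a1 o3 o2 m2 m3 m1 d2 d3 d1
          · exact hi23 o3
          · exact H3 a3 a2 a1 o3 o1 m3 m2 m1 d3 d2 d1
  calc Z.card = ∑ w ∈ SA.disjSum SB, (Z.filter fun z => φ z = w).card :=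
        Finset.card_eq_sum_card_fiberwise hmaps
    _ ≤ ∑ _w ∈ SA.disjSum SB, 2 := Finset.sum_le_sum (fun w hw => hfib w hw)
    _ = 2 * (SA.card + SB.card) := by
        rw [Finset.sum_const, Finset.card_disjSum, smul_eq_mul]
        ring
end

section
/- Staircase structure of the minimum: let A be a p×q Monge matrix, B a q×r Monge matrix, m ∈ (0..q), C^L = A[·,0..m) ⊗ B[0..m,·), C^R = A[·,m..q) ⊗ B[m..q,·), and C = A ⊗ B. Define lst(i) = max({−1} ∪ {k ∈ [0..r) : C^L[i,k] ≤ C^R[i,k]}). Then (a) C[i,k] = C^L[i,k] for k ≤ lst(i) and C[i,k] = C^R[i,k] < C^L[i,k] for k > lst(i), and (b) the sequence lst is non-increasing in i, i.e., lst(i+1) ≤ lst(i) for i ∈ [0..p−1). -/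
open Finset

/-- Monge inequality extended along columns for adjacent rows. -/
lemma monge_row (M : ℕ → ℕ → ℝ) (P Q : ℕ)
    (h : ∀ i j, i + 1 < P → j + 1 < Q →
      M i j + M (i + 1) (j + 1) ≤ M i (j + 1) + M (i + 1) j)
    (i : ℕ) (hi : i + 1 < P) :
    ∀ j' j, j ≤ j' → j' < Q → M i j + M (i + 1) j' ≤ M i j' + M (i + 1) j := by
  intro j'
  induction j' with
  | zero =>
    intro j hle _
    have : j = 0 := Nat.le_zero.mp hle
    subst this; linarith
  | succ n ih =>
    intro j hle hlt
    rcases Nat.lt_or_ge j (n + 1) with h1 | h2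
    · have h2 := ih j (by omega) (by omega)
      have h3 := h i n hi hlt
      linarith
    · have : j = n + 1 := by omega
      subst this; linarith

/-- Monge inequality extended to arbitrary submatrices. -/
lemma monge_gen (M : ℕ → ℕ → ℝ) (P Q : ℕ)
    (h : ∀ i j, i + 1 < P → j + 1 < Q →
      M i j + M (i + 1) (j + 1) ≤ M i (j + 1) + M (i + 1) j) :
    ∀ i' i j j', i ≤ i' → j ≤ j' → i' < P → j' < Q →
      M i j + M i' j' ≤ M i j' + M i' j := by
  intro i'
  induction i' with
  | zero =>
    intro i j j' hle _ _ _
    have : i = 0 := Nat.le_zero.mp hle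
    subst this; linarith
  | succ n ih =>
    intro i j j' hle hle' hlt hlt'
    rcases Nat.lt_or_ge i (n + 1) with h1 | h2
    · have h2 := ih i j j' (by omega) hle' (by omega) hlt'
      have h3 := monge_row M P Q h n hlt j' j hle' hlt'
      linarith
    · have : i = n + 1 := by omega
      subst this; linarith

open Finset in
/-- Staircase structure of the minimum: with
`lst(i) = max({−1} ∪ {k ∈ [0..r) : C^L[i,k] ≤ C^R[i,k]})`, we have
(a) `C[i,k] = C^L[i,k]` for `k ≤ lst(i)` and `C[i,k] = C^R[i,k] < C^L[i,k]` for
`k > lst(i)`, and (b) `lst` is non-increasing. -/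
theorem staircase_structure (p q r m : ℕ) (hm0 : 0 < m) (hmq : m < q)
    (A B CL CR C : ℕ → ℕ → ℝ) (lst : ℕ → ℤ)
    (hA : ∀ i j, i + 1 < p → j + 1 < q →
        A i j + A (i + 1) (j + 1) ≤ A i (j + 1) + A (i + 1) j)
    (hB : ∀ j k, j + 1 < q → k + 1 < r →
        B j k + B (j + 1) (k + 1) ≤ B j (k + 1) + B (j + 1) k)
    (hCL : ∀ i k, CL i k =
        (Finset.range m).inf' (Finset.nonempty_range_iff.mpr hm0.ne')
          (fun j => A i j + B j k))
    (hCR : ∀ i k, CR i k =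
        (Finset.Ico m q).inf' (Finset.nonempty_Ico.mpr hmq)
          (fun j => A i j + B j k))
    (hC : ∀ i k, C i k =
        (Finset.range q).inf' (Finset.nonempty_range_iff.mpr (by omega))
          (fun j => A i j + B j k))
    (hlst : ∀ i, lst i =
        (insert (-1 : ℤ)
          (((Finset.range r).filter (fun k => CL i k ≤ CR i k)).image
            (fun k : ℕ => (k : ℤ)))).max' (Finset.insert_nonempty _ _)) :
    (∀ i k, i < p → k < r →
      (((k : ℤ) ≤ lst i → C i k = CL i k) ∧
       (lst i < (k : ℤ) → C i k = CR i k ∧ CR i k < CL i k))) ∧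
    (∀ i, i + 1 < p → lst (i + 1) ≤ lst i) := by
  -- C is the min of CL and CR
  have hmin : ∀ i k, C i k = min (CL i k) (CR i k) := by
    intro i k
    rw [hC, hCL, hCR]
    have hset : Finset.range q = Finset.range m ∪ Finset.Ico m q := by
      rw [Finset.range_eq_Ico, Finset.range_eq_Ico]
      exact (Finset.Ico_union_Ico_eq_Ico (Nat.zero_le m) hmq.le).symm
    simp only [hset]
    exact Finset.inf'_union _ _ _
  -- witnesses
  have wL : ∀ i k, ∃ j < m, CL i k = A i j + B j k := by
    intro i k
    obtain ⟨j, hj, hje⟩ := Finset.exists_mem_eq_inf' (Finset.nonempty_range_iff.mpr hm0.ne')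
      (fun j => A i j + B j k)
    exact ⟨j, Finset.mem_range.mp hj, (hCL i k).trans hje⟩
  have wR : ∀ i k, ∃ j, m ≤ j ∧ j < q ∧ CR i k = A i j + B j k := by
    intro i k
    obtain ⟨j, hj, hje⟩ := Finset.exists_mem_eq_inf' (Finset.nonempty_Ico.mpr hmq)
      (fun j => A i j + B j k)
    obtain ⟨h1, h2⟩ := Finset.mem_Ico.mp hj
    exact ⟨j, h1, h2, (hCR i k).trans hje⟩
  have leL : ∀ i k j, j < m → CL i k ≤ A i j + B j k := by
    intro i k j hj
    rw [hCL]
    exact Finset.inf'_le _ (Finset.mem_range.mpr hj)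
  have leR : ∀ i k j, m ≤ j → j < q → CR i k ≤ A i j + B j k := by
    intro i k j h1 h2
    rw [hCR]
    exact Finset.inf'_le _ (Finset.mem_Ico.mpr ⟨h1, h2⟩)
  -- downward closedness in k
  have keyK : ∀ i k k', k ≤ k' → k' < r → CL i k' ≤ CR i k' → CL i k ≤ CR i k := by
    intro i k k' hkk hkr hLE
    obtain ⟨jL, hjL, hjLe⟩ := wL i k'
    obtain ⟨jR, hjR1, hjR2, hjRe⟩ := wR i k
    have h1 := leL i k jL hjL
    have h2 := leR i k' jR hjR1 hjR2
    have h3 := monge_gen B q r hB jR jL k k' (by omega) hkk hjR2 hkr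
    linarith
  -- downward closedness in i
  have keyI : ∀ i k, i + 1 < p → CL (i + 1) k ≤ CR (i + 1) k → CL i k ≤ CR i k := by
    intro i k hip hLE
    obtain ⟨jL, hjL, hjLe⟩ := wL (i + 1) k
    obtain ⟨jR, hjR1, hjR2, hjRe⟩ := wR i k
    have h1 := leL i k jL hjL
    have h2 := leR (i + 1) k jR hjR1 hjR2
    have h3 := monge_row A p q hA i hip jR jL (by omega) hjR2
    linarith
  -- lst facts
  have lst_ge : ∀ i k, k < r → CL i k ≤ CR i k → (k : ℤ) ≤ lst i := by
    intro i k hkr hle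
    rw [hlst]
    exact Finset.le_max' _ _ (Finset.mem_insert_of_mem
      (Finset.mem_image_of_mem _ (Finset.mem_filter.mpr ⟨Finset.mem_range.mpr hkr, hle⟩)))
  have lst_mem : ∀ i, lst i = -1 ∨ ∃ k, k < r ∧ CL i k ≤ CR i k ∧ lst i = (k : ℤ) := by
    intro i
    have := Finset.max'_mem _ (Finset.insert_nonempty (-1 : ℤ)
      (((Finset.range r).filter (fun k => CL i k ≤ CR i k)).image (fun k : ℕ => (k : ℤ))))
    rw [← hlst i] at this
    rcases Finset.mem_insert.mp this with h | h
    · exact Or.inl h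
    · obtain ⟨k, hk, hke⟩ := Finset.mem_image.mp h
      obtain ⟨hk1, hk2⟩ := Finset.mem_filter.mp hk
      exact Or.inr ⟨k, Finset.mem_range.mp hk1, hk2, hke.symm⟩
  have lst_ge_neg : ∀ i, (-1 : ℤ) ≤ lst i := by
    intro i
    rw [hlst]
    exact Finset.le_max' _ _ (Finset.mem_insert_self _ _)
  constructor
  · intro i k _ hkr
    constructor
    · intro hk
      rcases lst_mem i with h | ⟨k0, hk0r, hk0le, hk0e⟩
      · omega
      · rw [hk0e] at hk
        have hkk0 : k ≤ k0 := by exact_mod_cast hk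
        have := keyK i k k0 hkk0 hk0r hk0le
        rw [hmin]
        exact min_eq_left this
    · intro hk
      have hlt : CR i k < CL i k := by
        by_contra hcon
        push_neg at hcon
        have := lst_ge i k hkr hcon
        omega
      refine ⟨?_, hlt⟩
      rw [hmin]
      exact min_eq_right hlt.le
  · intro i hip
    rcases lst_mem (i + 1) with h | ⟨k0, hk0r, hk0le, hk0e⟩
    · rw [h]; exact lst_ge_neg i
    · rw [hk0e]
      exact lst_ge i k0 hk0r (keyI i k0 hip hk0le)
end

section
/- In the alignment graph G^s of a subpermutation s, every cycle has strictly negative total weight; in particular G^s contains no cycles of nonnegative length. -/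
/-- `s` is a subpermutation of length `n` whose non-`★` entries (encoded as `some y`)
form a permutation of `[0..m)`. -/
def IsSubPerm (n m : ℕ) (s : ℕ → Option ℕ) : Prop :=
  (∀ i, i < n → ∀ y, s i = some y → y < m) ∧
  (∀ y, y < m → ∃! i, i < n ∧ s i = some y)

/-- Weighted edges of the alignment graph `G^s` on vertex set `[0..n] × [0..m]`:
upward edges of weight 0, rightward edges of weight 0, diagonal edges
`(i, s[i]) → (i+1, s[i]+1)` of weight 1 (when `s[i] ≠ ★`), and leftward edges of
weight `−2`. -/
def AGEdge (n m : ℕ) (s : ℕ → Option ℕ) (u v : ℕ × ℕ) (w : ℤ) : Prop :=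
  (u.1 ≤ n ∧ u.2 < m ∧ v = (u.1, u.2 + 1) ∧ w = 0) ∨
  (u.1 < n ∧ u.2 ≤ m ∧ v = (u.1 + 1, u.2) ∧ w = 0) ∨
  (u.1 < n ∧ s u.1 = some u.2 ∧ v = (u.1 + 1, u.2 + 1) ∧ w = 1) ∨
  (0 < u.1 ∧ u.1 ≤ n ∧ u.2 ≤ m ∧ v = (u.1 - 1, u.2) ∧ w = -2)

/-- In the alignment graph of a subpermutation, every cycle has strictly
negative total weight. -/
theorem alignment_graph_no_nonnegative_cycles (n m : ℕ) (s : ℕ → Option ℕ)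
    (hs : IsSubPerm n m s)
    (L : ℕ) (hL : 1 ≤ L) (f : ℕ → ℕ × ℕ) (wt : ℕ → ℤ)
    (hcyc : f L = f 0)
    (hedge : ∀ t, t < L → AGEdge n m s (f t) (f (t + 1)) (wt t)) :
    ∑ t ∈ Finset.range L, wt t < 0 := by
  -- y is nondecreasing along edges
  have hmono : ∀ t, t < L → (f t).2 ≤ (f (t + 1)).2 := by
    intro t ht
    rcases hedge t ht with ⟨_, _, hv, _⟩ | ⟨_, _, hv, _⟩ | ⟨_, _, hv, _⟩ | ⟨_, _, _, hv, _⟩ <;>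
      simp [hv]
  -- hence monotone up to L
  have hmono' : ∀ t, t ≤ L → (f 0).2 ≤ (f t).2 := by
    intro t ht
    induction t with
    | zero => exact le_refl _
    | succ k ih =>
      exact le_trans (ih (Nat.le_of_succ_le ht)) (hmono k (Nat.lt_of_succ_le ht))
  have hmono'' : ∀ t, t ≤ L → (f t).2 ≤ (f L).2 := by
    intro t ht
    have haux : ∀ d, t + d ≤ L → (f t).2 ≤ (f (t + d)).2 := by
      intro d
      induction d with
      | zero => intro _; exact le_refl _
      | succ k ih =>
        intro hk
        calc (f t).2 ≤ (f (t + k)).2 := ih (by omega)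
          _ ≤ (f (t + k + 1)).2 := hmono _ (by omega)
          _ = (f (t + (k + 1))).2 := by ring_nf
    have := haux (L - t) (by omega)
    rwa [show t + (L - t) = L by omega] at this
  -- y is constant on the cycle
  have hconst : ∀ t, t ≤ L → (f t).2 = (f 0).2 := by
    intro t ht
    have := hmono'' t ht
    rw [hcyc] at this
    exact le_antisymm this (hmono' t ht)
  -- each edge has wt t = Δx - 1
  have hkey : ∀ t, t < L → wt t = ((f (t + 1)).1 : ℤ) - ((f t).1 : ℤ) - 1 := by
    intro t ht
    have h1 : (f t).2 = (f 0).2 := hconst t (le_of_lt ht)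
    have h2 : (f (t + 1)).2 = (f 0).2 := hconst (t + 1) ht
    rcases hedge t ht with ⟨_, _, hv, _⟩ | ⟨_, _, hv, hw⟩ | ⟨_, _, hv, _⟩ | ⟨hpos, _, _, hv, hw⟩
    · rw [hv] at h2; simp at h2; omega
    · rw [hv, hw]; push_cast; ring
    · rw [hv] at h2; simp at h2; omega
    · rw [hv, hw]; simp only; omega
  calc ∑ t ∈ Finset.range L, wt t
      = ∑ t ∈ Finset.range L, (((f (t + 1)).1 : ℤ) - ((f t).1 : ℤ) - 1) :=
        Finset.sum_congr rfl fun t ht => hkey t (Finset.mem_range.mp ht)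
    _ = (∑ t ∈ Finset.range L, (((f (t + 1)).1 : ℤ) - ((f t).1 : ℤ))) - L := by
        rw [Finset.sum_sub_distrib, Finset.sum_const, Finset.card_range]; simp
    _ = ((f L).1 : ℤ) - ((f 0).1 : ℤ) - L := by
        rw [Finset.sum_range_sub (fun t => ((f t).1 : ℤ))]
    _ = -L := by rw [hcyc]; ring
    _ < 0 := by omega
end

section
/- For a subpermutation s of length n and indices 0 ≤ i < j ≤ n, the length of the longest path from (i,0) to (j,|s*|) in the alignment graph G^s equals LIS(s[i..j)), the length of the longest strictly increasing subsequence of s[i..j) containing no ★ symbols; and for i ≥ j, the longest such path has length −2(i−j). -/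
/-- The set of total weights of walks in `G^s` from vertex `a` to vertex `b`. -/
def WalkWeights (n m : ℕ) (s : ℕ → Option ℕ) (a b : ℕ × ℕ) : Set ℤ :=
  {w | ∃ (L : ℕ) (f : ℕ → ℕ × ℕ) (wt : ℕ → ℤ),
    f 0 = a ∧ f L = b ∧ (∀ t, t < L → AGEdge n m s (f t) (f (t + 1)) (wt t)) ∧
    w = ∑ t ∈ Finset.range L, wt t}

/-- The set of lengths of strictly increasing subsequences of `s[i..j)` avoiding `★`. -/
def LisSet (s : ℕ → Option ℕ) (i j : ℕ) : Set ℕ :=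
  {ℓ | ∃ g : ℕ → ℕ,
    (∀ t u, t < u → u < ℓ → g t < g u) ∧
    (∀ t, t < ℓ → i ≤ g t ∧ g t < j) ∧
    (∀ t, t < ℓ → (s (g t)).isSome) ∧
    (∀ t u, t < u → u < ℓ → ∀ y z, s (g t) = some y → s (g u) = some z → y < z)}

section
variable {n m : ℕ} {s : ℕ → Option ℕ}

lemma walk_nil (a : ℕ × ℕ) : (0 : ℤ) ∈ WalkWeights n m s a a :=
  ⟨0, fun _ => a, fun _ => 0, rfl, rfl, fun t ht => absurd ht (Nat.not_lt_zero t), by simp⟩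

lemma walk_single {a b : ℕ × ℕ} {w : ℤ} (h : AGEdge n m s a b w) :
    w ∈ WalkWeights n m s a b := by
  refine ⟨1, fun t => if t = 0 then a else b, fun _ => w, by simp, by simp, ?_, by simp⟩
  intro t ht
  interval_cases t
  simpa using h

lemma walk_concat {a b c : ℕ × ℕ} {w1 w2 : ℤ}
    (h1 : w1 ∈ WalkWeights n m s a b) (h2 : w2 ∈ WalkWeights n m s b c) :
    w1 + w2 ∈ WalkWeights n m s a c := by
  obtain ⟨L1, f1, wt1, hf10, hf1L, he1, hw1⟩ := h1
  obtain ⟨L2, f2, wt2, hf20, hf2L, he2, hw2⟩ := h2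
  refine ⟨L1 + L2, fun t => if t < L1 then f1 t else f2 (t - L1),
    fun t => if t < L1 then wt1 t else wt2 (t - L1), ?_, ?_, ?_, ?_⟩
  · by_cases h : 0 < L1
    · simp [h, hf10]
    · have : L1 = 0 := by omega
      subst this
      simp [hf20, ← hf1L, hf10]
  · have : ¬ (L1 + L2 < L1) := by omega
    simp [this, hf2L]
  · intro t ht
    by_cases h : t < L1
    · by_cases h' : t + 1 < L1
      · simpa [h, h'] using he1 t h
      · have ht1 : t + 1 = L1 := by omega
        have hb : f2 (t + 1 - L1) = f1 (t + 1) := by rw [ht1]; simp [hf20, hf1L]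
        simp only [if_pos h, if_neg (by omega : ¬ t + 1 < L1), hb]
        exact he1 t h
    · have h' : ¬ t + 1 < L1 := by omega
      simp only [if_neg h, if_neg h']
      have : t + 1 - L1 = (t - L1) + 1 := by omega
      rw [this]
      exact he2 (t - L1) (by omega)
  · rw [Finset.sum_range_add]
    have e1 : ∀ x ∈ Finset.range L1, (if x < L1 then wt1 x else wt2 (x - L1)) = wt1 x := by
      intro x hx; simp [Finset.mem_range.mp hx]
    have e2 : ∀ x ∈ Finset.range L2,
        (if L1 + x < L1 then wt1 (L1 + x) else wt2 (L1 + x - L1)) = wt2 x := by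
      intro x hx; simp
    rw [Finset.sum_congr rfl e1, Finset.sum_congr rfl e2, hw1, hw2]

lemma walk_right (x y d : ℕ) (hx : x + d ≤ n) (hy : y ≤ m) :
    (0 : ℤ) ∈ WalkWeights n m s (x, y) (x + d, y) := by
  induction d with
  | zero => exact walk_nil _
  | succ d ih =>
    have h1 : (0:ℤ) ∈ WalkWeights n m s (x, y) (x + d, y) := ih (by omega)
    have h2 : (0:ℤ) ∈ WalkWeights n m s (x + d, y) (x + d + 1, y) :=
      walk_single (Or.inr (Or.inl ⟨by omega, hy, rfl, rfl⟩))
    simpa [← Nat.add_assoc] using walk_concat h1 h2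

lemma walk_up (x y d : ℕ) (hx : x ≤ n) (hy : y + d ≤ m) :
    (0 : ℤ) ∈ WalkWeights n m s (x, y) (x, y + d) := by
  induction d with
  | zero => exact walk_nil _
  | succ d ih =>
    have h1 : (0:ℤ) ∈ WalkWeights n m s (x, y) (x, y + d) := ih (by omega)
    have h2 : (0:ℤ) ∈ WalkWeights n m s (x, y + d) (x, y + d + 1) :=
      walk_single (Or.inl ⟨hx, by omega, rfl, rfl⟩)
    simpa [← Nat.add_assoc] using walk_concat h1 h2

lemma walk_left (x y d : ℕ) (hx : x ≤ n) (hd : d ≤ x) (hy : y ≤ m) :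
    (-2 * (d : ℤ)) ∈ WalkWeights n m s (x, y) (x - d, y) := by
  induction d with
  | zero => simpa using walk_nil (a := (x, y)) (n := n) (m := m) (s := s)
  | succ d ih =>
    have h1 : (-2 * (d:ℤ)) ∈ WalkWeights n m s (x, y) (x - d, y) := ih (by omega)
    have h2 : (-2 : ℤ) ∈ WalkWeights n m s (x - d, y) (x - d - 1, y) :=
      walk_single (Or.inr (Or.inr (Or.inr ⟨by omega, by omega, hy, rfl, rfl⟩)))
    have := walk_concat h1 h2
    have e : x - d - 1 = x - (d + 1) := by omega
    rw [e] at this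
    have e2 : -2 * ((d:ℤ) + 1) = -2 * (d:ℤ) + -2 := by ring
    rw [show ((d+1:ℕ):ℤ) = (d:ℤ)+1 by push_cast; ring, e2]
    exact this

lemma walk_diag {x y : ℕ} (hx : x < n) (hxy : s x = some y) :
    (1 : ℤ) ∈ WalkWeights n m s (x, y) (x + 1, y + 1) :=
  walk_single (Or.inr (Or.inr (Or.inl ⟨hx, hxy, rfl, rfl⟩)))

end


/-- Lengths of increasing subsequences of indices in `[i, x)` with values `< y`. -/
def ChainSet (s : ℕ → Option ℕ) (i x y : ℕ) : Set ℕ :=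
  {ℓ | ∃ g : ℕ → ℕ,
    (∀ t u, t < u → u < ℓ → g t < g u) ∧
    (∀ t, t < ℓ → i ≤ g t ∧ g t < x) ∧
    (∀ t, t < ℓ → ∃ v, s (g t) = some v ∧ v < y) ∧
    (∀ t u, t < u → u < ℓ → ∀ a b, s (g t) = some a → s (g u) = some b → a < b)}

section
variable {s : ℕ → Option ℕ} {i x y : ℕ}

lemma chain_zero : 0 ∈ ChainSet s i x y :=
  ⟨id, by omega, by omega, by omega, by omega⟩

lemma chain_bdd {ℓ : ℕ} (h : ℓ ∈ ChainSet s i x y) : ℓ ≤ x := by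
  obtain ⟨g, hmono, hbd, -, -⟩ := h
  rcases Nat.eq_zero_or_pos ℓ with h0 | h0
  · omega
  have key : ∀ t, t < ℓ → i + t ≤ g t := by
    intro t
    induction t with
    | zero => intro ht; simpa using (hbd 0 ht).1
    | succ t ih =>
      intro ht
      have h1 := ih (by omega)
      have h2 := hmono t (t + 1) (by omega) ht
      omega
  have := key (ℓ - 1) (by omega)
  have := (hbd (ℓ - 1) (by omega)).2
  omega

lemma chain_bddAbove : BddAbove (ChainSet s i x y) := ⟨x, fun _ h => chain_bdd h⟩

noncomputable def Lf (s : ℕ → Option ℕ) (i x y : ℕ) : ℕ := sSup (ChainSet s i x y)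

lemma Lf_mem : Lf s i x y ∈ ChainSet s i x y :=
  Nat.sSup_mem ⟨0, chain_zero⟩ chain_bddAbove

lemma le_Lf {ℓ : ℕ} (h : ℓ ∈ ChainSet s i x y) : ℓ ≤ Lf s i x y :=
  le_csSup chain_bddAbove h

lemma Lf_mono {x' y' : ℕ} (hx : x ≤ x') (hy : y ≤ y') : Lf s i x y ≤ Lf s i x' y' := by
  apply le_Lf
  obtain ⟨g, h1, h2, h3, h4⟩ := (Lf_mem : Lf s i x y ∈ ChainSet s i x y)
  exact ⟨g, h1, fun t ht => ⟨(h2 t ht).1, by have := (h2 t ht).2; omega⟩,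
    fun t ht => by obtain ⟨v, hv, hvy⟩ := h3 t ht; exact ⟨v, hv, by omega⟩, h4⟩

lemma Lf_base_x (h : x ≤ i) : Lf s i x y = 0 := by
  have := Lf_mem (s := s) (i := i) (x := x) (y := y)
  obtain ⟨g, -, h2, -, -⟩ := this
  by_contra hne
  have := h2 0 (by omega)
  omega

lemma Lf_base_y : Lf s i x 0 = 0 := by
  have := Lf_mem (s := s) (i := i) (x := x) (y := 0)
  obtain ⟨g, -, -, h3, -⟩ := this
  by_contra hne
  obtain ⟨v, -, hv⟩ := h3 0 (by omega)
  omega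

lemma Lf_diag (hix : i ≤ x) (hxy : s x = some y) :
    Lf s i x y + 1 ≤ Lf s i (x + 1) (y + 1) := by
  apply le_Lf
  obtain ⟨g, h1, h2, h3, h4⟩ := (Lf_mem : Lf s i x y ∈ ChainSet s i x y)
  set ℓ := Lf s i x y with hℓ
  refine ⟨fun t => if t < ℓ then g t else x, ?_, ?_, ?_, ?_⟩
  · intro t u htu hu
    by_cases hu' : u < ℓ
    · simp only [if_pos (by omega : t < ℓ), if_pos hu']; exact h1 t u htu hu'
    · have hu'' : u = ℓ := by omega
      simp only [if_pos (by omega : t < ℓ), if_neg (by omega : ¬ u < ℓ)]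
      exact (h2 t (by omega)).2
  · intro t ht
    by_cases ht' : t < ℓ
    · simp only [if_pos ht']; exact ⟨(h2 t ht').1, by have := (h2 t ht').2; omega⟩
    · simp only [if_neg ht']; omega
  · intro t ht
    by_cases ht' : t < ℓ
    · simp only [if_pos ht']
      obtain ⟨v, hv, hvy⟩ := h3 t ht'
      exact ⟨v, hv, by omega⟩
    · simp only [if_neg ht']
      exact ⟨y, hxy, by omega⟩
  · intro t u htu hu a b ha hb
    dsimp only at ha hb
    by_cases hu' : u < ℓ
    · rw [if_pos (by omega : t < ℓ)] at ha
      rw [if_pos hu'] at hb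
      exact h4 t u htu hu' a b ha hb
    · rw [if_pos (by omega : t < ℓ)] at ha
      rw [if_neg hu'] at hb
      obtain ⟨v, hv, hvy⟩ := h3 t (by omega)
      rw [ha] at hv
      rw [hxy] at hb
      have hav : a = v := by injection hv
      have hby : b = y := by injection hb; omega
      omega

lemma Lf_drop (hx : 0 < x) : Lf s i x y ≤ Lf s i (x - 1) y + 1 := by
  obtain ⟨g, h1, h2, h3, h4⟩ := (Lf_mem : Lf s i x y ∈ ChainSet s i x y)
  set ℓ := Lf s i x y with hℓ
  rcases Nat.eq_zero_or_pos ℓ with h0 | h0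
  · omega
  by_cases hlast : g (ℓ - 1) < x - 1
  · have : ℓ ≤ Lf s i (x - 1) y := by
      apply le_Lf
      refine ⟨g, h1, fun t ht => ⟨(h2 t ht).1, ?_⟩, h3, h4⟩
      rcases Nat.lt_or_ge t (ℓ - 1) with h | h
      · have := h1 t (ℓ - 1) h (by omega); omega
      · have ht' : t = ℓ - 1 := by omega
        rw [ht']; omega
    omega
  · have : ℓ - 1 ≤ Lf s i (x - 1) y := by
      apply le_Lf
      refine ⟨g, fun t u htu hu => h1 t u htu (by omega),
        fun t ht => ⟨(h2 t (by omega)).1, ?_⟩, fun t ht => h3 t (by omega),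
        fun t u htu hu => h4 t u htu (by omega)⟩
      have := h1 t (ℓ - 1) ht (by omega)
      have := (h2 (ℓ - 1) (by omega)).2
      omega
    omega

end

section
variable {n m : ℕ} {s : ℕ → Option ℕ}

noncomputable def Phi (s : ℕ → Option ℕ) (i : ℕ) (p : ℕ × ℕ) : ℤ :=
  (Lf s i (max p.1 i) p.2 : ℤ) - 2 * ((i - p.1 : ℕ) : ℤ)

lemma edge_le {i : ℕ} {u v : ℕ × ℕ} {w : ℤ} (h : AGEdge n m s u v w) :
    w ≤ Phi s i v - Phi s i u := by
  obtain ⟨x, y⟩ := u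
  rcases h with ⟨hx, hy, hv, hw⟩ | ⟨hx, hy, hv, hw⟩ | ⟨hx, hxy, hv, hw⟩ | ⟨hx, hx', hy, hv, hw⟩
  all_goals subst hv hw; simp only [Phi]
  · -- up
    have := Lf_mono (s := s) (i := i) (le_refl (max x i)) (show y ≤ y + 1 by omega)
    simp only at *
    omega
  · -- right
    have := Lf_mono (s := s) (i := i) (show max x i ≤ max (x + 1) i by omega) (le_refl y)
    simp only at *
    omega
  · -- diag
    simp only at *
    rcases Nat.lt_or_ge x i with hxi | hxi
    · have e1 : max x i = i := by omega
      have e2 : max (x + 1) i = i := by omega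
      rw [e1, e2]
      have := Lf_mono (s := s) (i := i) (le_refl i) (show y ≤ y + 1 by omega)
      omega
    · have e1 : max x i = x := by omega
      have e2 : max (x + 1) i = x + 1 := by omega
      rw [e1, e2]
      have := Lf_diag hxi hxy
      omega
  · -- back
    simp only at *
    rcases Nat.lt_or_ge i x with hxi | hxi
    · have e1 : max x i = x := by omega
      have e2 : max (x - 1) i = x - 1 := by omega
      rw [e1, e2]
      have := Lf_drop (s := s) (i := i) (y := y) hx
      omega
    · have e1 : max x i = i := by omega
      have e2 : max (x - 1) i = i := by omega
      rw [e1, e2]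
      omega

lemma walk_sum_le {i : ℕ} (L : ℕ) (f : ℕ → ℕ × ℕ) (wt : ℕ → ℤ)
    (he : ∀ t, t < L → AGEdge n m s (f t) (f (t + 1)) (wt t)) :
    ∑ t ∈ Finset.range L, wt t ≤ Phi s i (f L) - Phi s i (f 0) := by
  induction L with
  | zero => simp
  | succ L ih =>
    rw [Finset.sum_range_succ]
    have h1 := ih (fun t ht => he t (by omega))
    have h2 := edge_le (i := i) (he L (by omega))
    omega

lemma walk_to_diag (x y x' y' : ℕ) (hx : x ≤ x') (hy : y ≤ y') (hx' : x' < n)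
    (hy' : y' < m) (hd : s x' = some y') :
    (1 : ℤ) ∈ WalkWeights n m s (x, y) (x' + 1, y' + 1) := by
  have h1 : (0:ℤ) ∈ WalkWeights n m s (x, y) (x', y) := by
    have := walk_right (n := n) (m := m) (s := s) x y (x' - x) (by omega) (by omega)
    rwa [show x + (x' - x) = x' by omega] at this
  have h2 : (0:ℤ) ∈ WalkWeights n m s (x', y) (x', y') := by
    have := walk_up (n := n) (m := m) (s := s) x' y (y' - y) (by omega) (by omega)
    rwa [show y + (y' - y) = y' by omega] at this
  have h3 := walk_diag (m := m) hx' hd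
  have := walk_concat (walk_concat h1 h2) h3
  simpa using this

end

/-- For `0 ≤ i < j ≤ n`, the length of the longest path from `(i,0)` to
`(j,m)` in `G^s` equals `LIS(s[i..j))`; and for `i ≥ j` it equals `−2(i−j)`. -/
theorem alignment_graph_longest_path (n m : ℕ) (s : ℕ → Option ℕ)
    (hs : IsSubPerm n m s) (i j : ℕ) (hi : i ≤ n) (hj : j ≤ n) :
    (∀ ℓ : ℕ, i < j → IsGreatest (LisSet s i j) ℓ →
      IsGreatest (WalkWeights n m s (i, 0) (j, m)) (ℓ : ℤ)) ∧
    (j ≤ i →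
      IsGreatest (WalkWeights n m s (i, 0) (j, m)) (-2 * ((i : ℤ) - (j : ℤ)))) := by
  have hPhi0 : Phi s i (i, 0) = 0 := by
    simp only [Phi]
    rw [show max i i = i from max_self i, Lf_base_y]
    simp
  constructor
  · intro ℓ hij hG
    -- Lf s i j m = ℓ
    have hLf : Lf s i j m = ℓ := by
      have h1 : ℓ ≤ Lf s i j m := by
        apply le_Lf
        obtain ⟨g, hg1, hg2, hg3, hg4⟩ := hG.1
        refine ⟨g, hg1, hg2, ?_, hg4⟩
        intro t ht
        obtain ⟨v, hv⟩ := Option.isSome_iff_exists.mp (hg3 t ht)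
        exact ⟨v, hv, hs.1 (g t) (lt_of_lt_of_le (hg2 t ht).2 hj) v hv⟩
      have h2 : Lf s i j m ≤ ℓ := by
        apply hG.2
        obtain ⟨g, hg1, hg2, hg3, hg4⟩ := (Lf_mem : Lf s i j m ∈ ChainSet s i j m)
        refine ⟨g, hg1, hg2, ?_, hg4⟩
        intro t ht
        obtain ⟨v, hv, -⟩ := hg3 t ht
        exact Option.isSome_iff_exists.mpr ⟨v, hv⟩
      omega
    constructor
    · -- membership: construct a walk of weight ℓ
      obtain ⟨g, hg1, hg2, hg3, hg4⟩ := hG.1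
      have hv : ∀ t, t < ℓ → s (g t) = some ((s (g t)).iget) := by
        intro t ht
        have := hg3 t ht
        cases h : s (g t) with
        | none => rw [h] at this; simp at this
        | some a => simp
      set v : ℕ → ℕ := fun t => (s (g t)).iget with hvdef
      have hvm : ∀ t, t < ℓ → v t < m := by
        intro t ht
        exact hs.1 (g t) (lt_of_lt_of_le (hg2 t ht).2 hj) (v t) (hv t ht)
      have hvmono : ∀ t u, t < u → u < ℓ → v t < v u := by
        intro t u htu hu
        exact hg4 t u htu hu (v t) (v u) (hv t (by omega)) (hv u hu)
      rcases Nat.eq_zero_or_pos ℓ with h0 | h0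
      · subst h0
        have h1 : (0:ℤ) ∈ WalkWeights n m s (i, 0) (j, 0) := by
          have := walk_right (n := n) (m := m) (s := s) i 0 (j - i) (by omega) (by omega)
          rwa [show i + (j - i) = j by omega] at this
        have h2 : (0:ℤ) ∈ WalkWeights n m s (j, 0) (j, m) := by
          have := walk_up (n := n) (m := m) (s := s) j 0 m hj (by omega)
          simpa using this
        simpa using walk_concat h1 h2
      · have claim : ∀ k, k ≤ ℓ → 0 < k →
            ((k : ℤ) ∈ WalkWeights n m s (i, 0) (g (k - 1) + 1, v (k - 1) + 1)) := by
          intro k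
          induction k with
          | zero => omega
          | succ k ih =>
            intro hk hk'
            rcases Nat.eq_zero_or_pos k with hk0 | hk0
            · subst hk0
              simpa using walk_to_diag i 0 (g 0) (v 0)
                (hg2 0 (by omega)).1 (by omega)
                (lt_of_lt_of_le (hg2 0 (by omega)).2 hj) (hvm 0 (by omega)) (hv 0 (by omega))
            · have hprev := ih (by omega) hk0
              have hstep : (1:ℤ) ∈ WalkWeights n m s (g (k - 1) + 1, v (k - 1) + 1)
                  (g k + 1, v k + 1) := by
                apply walk_to_diag
                · have := hg1 (k - 1) k (by omega) (by omega); omega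
                · have := hvmono (k - 1) k (by omega) (by omega); omega
                · exact lt_of_lt_of_le (hg2 k (by omega)).2 hj
                · exact hvm k (by omega)
                · exact hv k (by omega)
              have := walk_concat hprev hstep
              have ek : k + 1 - 1 = k := by omega
              rw [ek, show ((k + 1 : ℕ) : ℤ) = (k : ℤ) + 1 by push_cast; ring]
              exact this
        have hmain := claim ℓ le_rfl h0
        have hlast1 : g (ℓ - 1) + 1 ≤ j := (hg2 (ℓ - 1) (by omega)).2
        have hlast2 : v (ℓ - 1) + 1 ≤ m := hvm (ℓ - 1) (by omega)
        have h1 : (0:ℤ) ∈ WalkWeights n m s (g (ℓ - 1) + 1, v (ℓ - 1) + 1)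
            (j, v (ℓ - 1) + 1) := by
          have := walk_right (n := n) (m := m) (s := s) (g (ℓ - 1) + 1) (v (ℓ - 1) + 1)
            (j - (g (ℓ - 1) + 1)) (by omega) (by omega)
          rwa [show g (ℓ - 1) + 1 + (j - (g (ℓ - 1) + 1)) = j by omega] at this
        have h2 : (0:ℤ) ∈ WalkWeights n m s (j, v (ℓ - 1) + 1) (j, m) := by
          have := walk_up (n := n) (m := m) (s := s) j (v (ℓ - 1) + 1)
            (m - (v (ℓ - 1) + 1)) hj (by omega)
          rwa [show v (ℓ - 1) + 1 + (m - (v (ℓ - 1) + 1)) = m by omega] at this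
        simpa using walk_concat (walk_concat hmain h1) h2
    · -- upper bound
      intro w hw
      obtain ⟨L, f, wt, hf0, hfL, he, hsum⟩ := hw
      have := walk_sum_le (i := i) L f wt he
      rw [hf0, hfL, hPhi0] at this
      have hPhiJ : Phi s i (j, m) = (ℓ : ℤ) := by
        simp only [Phi]
        rw [show max j i = j by omega, hLf, show i - j = 0 by omega]
        simp
      rw [hPhiJ] at this
      omega
  · intro hji
    constructor
    · have h1 : (-2 * ((i - j : ℕ) : ℤ)) ∈ WalkWeights n m s (i, 0) (j, 0) := by
        have := walk_left (n := n) (m := m) (s := s) i 0 (i - j) hi (by omega) (by omega)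
        rwa [show i - (i - j) = j by omega] at this
      have h2 : (0:ℤ) ∈ WalkWeights n m s (j, 0) (j, m) := by
        have := walk_up (n := n) (m := m) (s := s) j 0 m hj (by omega)
        simpa using this
      have := walk_concat h1 h2
      have e : -2 * ((i : ℤ) - (j : ℤ)) = -2 * ((i - j : ℕ) : ℤ) + 0 := by
        push_cast [hji]; ring
      rwa [e]
    · intro w hw
      obtain ⟨L, f, wt, hf0, hfL, he, hsum⟩ := hw
      have := walk_sum_le (i := i) L f wt he
      rw [hf0, hfL, hPhi0] at this
      have hPhiJ : Phi s i (j, m) = -2 * ((i : ℤ) - (j : ℤ)) := by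
        simp only [Phi]
        rw [show max j i = i by omega, Lf_base_x le_rfl]
        push_cast [hji]
        ring
      rw [hPhiJ] at this
      omega
end

section
/- For a permutation s of [0..n), the distance matrix M^s defined by M^s[i,j] = LIS(s[i..j)) for i < j and M^s[i,j] = −2(i−j) for i ≥ j satisfies −δ^Σ(M^s) = 2n − LIS(s); consequently the number of nonzero entries of the density matrix of M^s is at most 2n − LIS(s) ≤ 2n. -/
/-- The set of lengths of strictly increasing subsequences of the subarray `s[i..j)`
of a sequence `s : ℕ → ℕ`. -/
def PermLisSet (s : ℕ → ℕ) (i j : ℕ) : Set ℕ :=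
  {ℓ | ∃ g : ℕ → ℕ,
    (∀ t u, t < u → u < ℓ → g t < g u) ∧
    (∀ t, t < ℓ → i ≤ g t ∧ g t < j) ∧
    (∀ t u, t < u → u < ℓ → s (g t) < s (g u))}

lemma permlis_empty (s : ℕ → ℕ) {i j ℓ : ℕ} (h : ℓ ∈ PermLisSet s i j) (hji : j ≤ i) :
    ℓ = 0 := by
  obtain ⟨g, _, hrng, _⟩ := h
  by_contra h0
  have := hrng 0 (by omega)
  omega

lemma permlis_le_one (s : ℕ → ℕ) {i ℓ : ℕ} (h : ℓ ∈ PermLisSet s i (i+1)) : ℓ ≤ 1 := by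
  obtain ⟨g, hinc, hrng, _⟩ := h
  by_contra h0
  have h1 := hinc 0 1 (by omega) (by omega)
  have := hrng 0 (by omega)
  have := hrng 1 (by omega)
  omega

lemma chain_mono {g : ℕ → ℕ} {k : ℕ} (h : ∀ t u, t < u → u < k → g t < g u) :
    ∀ t u, t ≤ u → u < k → g t ≤ g u := by
  intro t u htu hu
  rcases eq_or_lt_of_le htu with rfl | h'
  · exact le_rfl
  · exact (h t u h' hu).le

lemma splice (s : ℕ → ℕ) (i j k m : ℕ) (hij : i < j)
    (hk : k ∈ PermLisSet s i (j+1)) (hm : m ∈ PermLisSet s (i+1) j) :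
    ∃ p q, p + q = k + m ∧ p ∈ PermLisSet s i j ∧ q ∈ PermLisSet s (i+1) (j+1) := by
  obtain ⟨gA, incA, rngA, valA⟩ := hk
  obtain ⟨gB, incB, rngB, valB⟩ := hm
  by_cases hAj : ∀ t, t < k → gA t < j
  · exact ⟨k, m, rfl,
      ⟨gA, incA, fun t ht => ⟨(rngA t ht).1, hAj t ht⟩, valA⟩,
      ⟨gB, incB, fun t ht => ⟨(rngB t ht).1, by have := (rngB t ht).2; omega⟩, valB⟩⟩
  by_cases hAi : ∀ t, t < k → i + 1 ≤ gA t
  · exact ⟨m, k, by omega,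
      ⟨gB, incB, fun t ht => ⟨by have := (rngB t ht).1; omega, (rngB t ht).2⟩, valB⟩,
      ⟨gA, incA, fun t ht => ⟨hAi t ht, (rngA t ht).2⟩, valA⟩⟩
  push_neg at hAj hAi
  obtain ⟨t1, ht1k, ht1⟩ := hAj
  obtain ⟨t0, ht0k, ht0⟩ := hAi
  have hgt1 : gA t1 = j := by have := (rngA t1 ht1k).2; omega
  have hgt0 : gA t0 = i := by have := (rngA t0 ht0k).1; omega
  have ht01 : t0 < t1 := by
    rcases lt_trichotomy t0 t1 with h | h | h
    · exact h
    · rw [h] at hgt0; omega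
    · have := incA t1 t0 h ht0k; omega
  have hk2 : 2 ≤ k := by omega
  have h0 : gA 0 = i := by
    rcases Nat.eq_zero_or_pos t0 with h | h
    · rw [← h]; exact hgt0
    · have h1 := incA 0 t0 h ht0k
      have h2 := (rngA 0 (by omega)).1
      omega
  have hlast : gA (k - 1) = j := by
    rcases eq_or_lt_of_le (show t1 ≤ k - 1 by omega) with h | h
    · rw [← h]; exact hgt1
    · have h1 := incA t1 (k - 1) h (by omega)
      have h2 := (rngA (k - 1) (by omega)).2
      omega
  -- the crossing data
  have hex : ∀ c : ℕ, ∃ ℓ, ℓ = m ∨ s (gA c) ≤ s (gB ℓ) := fun c => ⟨m, Or.inl rfl⟩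
  obtain ⟨d, hdle, F1, F2⟩ :
      ∃ d : ℕ → ℕ, (∀ c, d c ≤ m) ∧
        (∀ c ℓ, ℓ < d c → ℓ < m ∧ s (gB ℓ) < s (gA c)) ∧
        (∀ c, d c < m → s (gA c) ≤ s (gB (d c))) := by
    refine ⟨fun c => Nat.find (hex c), fun c => Nat.find_min' (hex c) (Or.inl rfl),
      ?_, ?_⟩
    · intro c ℓ hℓ
      have hℓ' : ℓ < Nat.find (hex c) := hℓ
      have h1 := Nat.find_min (hex c) hℓ'
      push_neg at h1
      have h2 : Nat.find (hex c) ≤ m := Nat.find_min' (hex c) (Or.inl rfl)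
      exact ⟨by omega, by omega⟩
    · intro c hc
      have hc' : Nat.find (hex c) < m := hc
      show s (gA c) ≤ s (gB (Nat.find (hex c)))
      rcases Nat.find_spec (hex c) with h | h
      · omega
      · exact h
  have hmono : ∀ c c', c < c' → c' < k → d c ≤ d c' := by
    intro c c' hcc hc'
    by_contra hcon
    push_neg at hcon
    obtain ⟨hm1, hv⟩ := F1 c (d c') hcon
    have h1 := F2 c' hm1
    have h2 := valA c c' hcc hc'
    omega
  have hQk : (d (k-1) = 0 ∧ 1 ≤ k-1) ∨ (1 ≤ d (k-1) ∧ gB (d (k-1) - 1) < gA (k-1)) := by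
    rcases Nat.eq_zero_or_pos (d (k - 1)) with h | h
    · exact Or.inl ⟨h, by omega⟩
    · refine Or.inr ⟨h, ?_⟩
      have := (rngB (d (k - 1) - 1) (by have := hdle (k-1); omega)).2
      omega
  have hexQ : ∃ c, (d c = 0 ∧ 1 ≤ c) ∨ (1 ≤ d c ∧ gB (d c - 1) < gA c) := ⟨k-1, hQk⟩
  obtain ⟨c, hcle, hQ, hcmin⟩ :
      ∃ c, c ≤ k - 1 ∧ ((d c = 0 ∧ 1 ≤ c) ∨ (1 ≤ d c ∧ gB (d c - 1) < gA c)) ∧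
        (∀ c', c' < c → ¬ ((d c' = 0 ∧ 1 ≤ c') ∨ (1 ≤ d c' ∧ gB (d c' - 1) < gA c'))) :=
    ⟨Nat.find hexQ, Nat.find_min' hexQ hQk, Nat.find_spec hexQ,
      fun c' h => Nat.find_min hexQ h⟩
  have hc1 : 1 ≤ c := by
    by_contra h
    have hc0 : c = 0 := by omega
    rw [hc0] at hQ
    rcases hQ with ⟨_, h2⟩ | ⟨h1, h2⟩
    · omega
    · rw [h0] at h2
      have := (rngB (d 0 - 1) (by have := hdle 0; omega)).1
      omega
  have hddm : d c ≤ m := hdle c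
  have hck : c < k := by omega
  have S1 : 1 ≤ d c → gB (d c - 1) < gA c ∧ s (gB (d c - 1)) < s (gA c) := by
    intro h1
    rcases hQ with ⟨h, _⟩ | ⟨_, h2⟩
    · omega
    · exact ⟨h2, (F1 c (d c - 1) (by omega)).2⟩
  have S2 : d c < m → gA (c - 1) < gB (d c) ∧ s (gA (c - 1)) < s (gB (d c)) := by
    intro hdm
    constructor
    · have hnotQ := hcmin (c - 1) (by omega)
      push_neg at hnotQ
      obtain ⟨hn1, hn2⟩ := hnotQ
      rcases Nat.eq_zero_or_pos (d (c - 1)) with h | h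
      · have hc10 : c - 1 = 0 := by have := hn1 h; omega
        have h2 := (rngB (d c) hdm).1
        rw [hc10, h0]
        omega
      · have hle := hn2 h
        have hmono1 : d (c - 1) ≤ d c := hmono (c - 1) c (by omega) hck
        have : gB (d (c - 1) - 1) < gB (d c) := incB (d (c - 1) - 1) (d c) (by omega) hdm
        omega
    · have hv := valA (c - 1) c (by omega) hck
      have := F2 c hdm
      omega
  -- construct the two chains
  refine ⟨c + (m - d c), d c + (k - c), by omega, ?_, ?_⟩
  · -- C : prefix of A ++ suffix of B, window [i, j)
    refine ⟨fun t => if t < c then gA t else gB (d c + (t - c)), ?_, ?_, ?_⟩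
    · intro t u htu hu
      by_cases ht : t < c <;> by_cases hu' : u < c
      · simp only [if_pos ht, if_pos hu']
        exact incA t u htu (by omega)
      · simp only [if_pos ht, if_neg hu']
        have hdm : d c < m := by omega
        have h1 : gA t ≤ gA (c - 1) := chain_mono incA t (c - 1) (by omega) (by omega)
        have h2 : gB (d c) ≤ gB (d c + (u - c)) :=
          chain_mono incB (d c) (d c + (u - c)) (by omega) (by omega)
        have := (S2 hdm).1
        omega
      · omega
      · simp only [if_neg ht, if_neg hu']
        exact incB _ _ (by omega) (by omega)
    · intro t ht
      by_cases h : t < c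
      · simp only [if_pos h]
        refine ⟨(rngA t (by omega)).1, ?_⟩
        have h2 : gA t ≤ gA (k - 2) := chain_mono incA t (k - 2) (by omega) (by omega)
        have h3 : gA (k - 2) < gA (k - 1) := incA (k - 2) (k - 1) (by omega) (by omega)
        omega
      · simp only [if_neg h]
        have := rngB (d c + (t - c)) (by omega)
        omega
    · intro t u htu hu
      by_cases ht : t < c <;> by_cases hu' : u < c
      · simp only [if_pos ht, if_pos hu']
        exact valA t u htu (by omega)
      · simp only [if_pos ht, if_neg hu']
        have hdm : d c < m := by omega
        have h1 : s (gA t) ≤ s (gA (c - 1)) := by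
          rcases eq_or_lt_of_le (show t ≤ c - 1 by omega) with h | h
          · simp [h]
          · exact (valA t (c - 1) h (by omega)).le
        have h2 : s (gB (d c)) ≤ s (gB (d c + (u - c))) := by
          rcases Nat.eq_zero_or_pos (u - c) with h | h
          · simp [h]
          · exact (valB (d c) (d c + (u - c)) (by omega) (by omega)).le
        have := (S2 hdm).2
        omega
      · omega
      · simp only [if_neg ht, if_neg hu']
        exact valB _ _ (by omega) (by omega)
  · -- D : prefix of B ++ suffix of A, window [i+1, j+1)
    refine ⟨fun t => if t < d c then gB t else gA (c + (t - d c)), ?_, ?_, ?_⟩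
    · intro t u htu hu
      by_cases ht : t < d c <;> by_cases hu' : u < d c
      · simp only [if_pos ht, if_pos hu']
        exact incB t u htu (by omega)
      · simp only [if_pos ht, if_neg hu']
        have h1 : gB t ≤ gB (d c - 1) := chain_mono incB t (d c - 1) (by omega) (by omega)
        have h2 : gA c ≤ gA (c + (u - d c)) :=
          chain_mono incA c (c + (u - d c)) (by omega) (by omega)
        have := (S1 (by omega)).1
        omega
      · omega
      · simp only [if_neg ht, if_neg hu']
        exact incA _ _ (by omega) (by omega)
    · intro t ht
      by_cases h : t < d c
      · simp only [if_pos h]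
        have := rngB t (by omega)
        omega
      · simp only [if_neg h]
        have h1 : gA 0 < gA c := incA 0 c (by omega) hck
        have h2 : gA c ≤ gA (c + (t - d c)) :=
          chain_mono incA c (c + (t - d c)) (by omega) (by omega)
        have h3 := (rngA (c + (t - d c)) (by omega)).2
        omega
    · intro t u htu hu
      by_cases ht : t < d c <;> by_cases hu' : u < d c
      · simp only [if_pos ht, if_pos hu']
        exact valB t u htu (by omega)
      · simp only [if_pos ht, if_neg hu']
        have h1 : s (gB t) ≤ s (gB (d c - 1)) := by
          rcases eq_or_lt_of_le (show t ≤ d c - 1 by omega) with h | h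
          · simp [h]
          · exact (valB t (d c - 1) h (by omega)).le
        have h2 : s (gA c) ≤ s (gA (c + (u - d c))) := by
          rcases Nat.eq_zero_or_pos (u - d c) with h | h
          · simp [h]
          · exact (valA c (c + (u - d c)) (by omega) (by omega)).le
        have := (S1 (by omega)).2
        omega
      · omega
      · simp only [if_neg ht, if_neg hu']
        exact valA _ _ (by omega) (by omega)

/-- For a permutation `s` of `[0..n)`, the distance matrix `M^s`
satisfies `−δ^Σ(M^s) = 2n − LIS(s)`; consequently the number of nonzero density
entries of `M^s` is at most `2n − LIS(s) ≤ 2n`. -/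
theorem distance_matrix_core_bound (n : ℕ) (s : ℕ → ℕ)
    (hs : Set.BijOn s (Set.Iio n) (Set.Iio n))
    (lis : ℕ → ℕ → ℕ)
    (hlis : ∀ i j, i ≤ n → j ≤ n → IsGreatest (PermLisSet s i j) (lis i j))
    (M : ℕ → ℕ → ℤ)
    (hM : ∀ i j, i ≤ n → j ≤ n →
      M i j = if i < j then (lis i j : ℤ) else -2 * ((i : ℤ) - (j : ℤ))) :
    -(∑ i ∈ Finset.range n, ∑ j ∈ Finset.range n,
        (M i (j + 1) + M (i + 1) j - M i j - M (i + 1) (j + 1)))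
      = 2 * (n : ℤ) - (lis 0 n : ℤ) ∧
    (((((Finset.range n) ×ˢ (Finset.range n)).filter
        (fun x => M x.1 (x.2 + 1) + M (x.1 + 1) x.2 - M x.1 x.2
          - M (x.1 + 1) (x.2 + 1) ≠ 0)).card : ℤ)
      ≤ 2 * (n : ℤ) - (lis 0 n : ℤ)) ∧
    2 * (n : ℤ) - (lis 0 n : ℤ) ≤ 2 * (n : ℤ) := by
  -- telescoping
  have hS : ∑ i ∈ Finset.range n, ∑ j ∈ Finset.range n,
      (M i (j + 1) + M (i + 1) j - M i j - M (i + 1) (j + 1))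
      = (M 0 n - M 0 0) - (M n n - M n 0) := by
    have inner : ∀ i, ∑ j ∈ Finset.range n,
        (M i (j + 1) + M (i + 1) j - M i j - M (i + 1) (j + 1))
        = (fun i => M i n - M i 0) i - (fun i => M i n - M i 0) (i + 1) := by
      intro i
      have h1 : ∀ j ∈ Finset.range n, M i (j+1) + M (i+1) j - M i j - M (i+1) (j+1)
          = (M i (j+1) - M i j) - (M (i+1) (j+1) - M (i+1) j) := fun j _ => by ring
      rw [Finset.sum_congr rfl h1, Finset.sum_sub_distrib,
        Finset.sum_range_sub (fun j => M i j), Finset.sum_range_sub (fun j => M (i+1) j)]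
    rw [Finset.sum_congr rfl (fun i _ => inner i),
      Finset.sum_range_sub' (fun i => M i n - M i 0)]
  have part1 : -(∑ i ∈ Finset.range n, ∑ j ∈ Finset.range n,
      (M i (j + 1) + M (i + 1) j - M i j - M (i + 1) (j + 1)))
      = 2 * (n : ℤ) - (lis 0 n : ℤ) := by
    rcases Nat.eq_zero_or_pos n with hn | hn
    · subst hn
      have h0 : lis 0 0 = 0 := permlis_empty s (hlis 0 0 le_rfl le_rfl).1 le_rfl
      rw [hS, h0]
      simp
    · have h1 : M 0 n = (lis 0 n : ℤ) := by rw [hM 0 n (by omega) le_rfl, if_pos hn]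
      have h2 : M 0 0 = 0 := by rw [hM 0 0 (by omega) (by omega), if_neg (by omega)]; ring
      have h3 : M n n = 0 := by rw [hM n n le_rfl le_rfl, if_neg (by omega)]; ring
      have h4 : M n 0 = -2 * (n : ℤ) := by
        rw [hM n 0 le_rfl (by omega), if_neg (by omega)]; ring
      rw [hS, h1, h2, h3, h4]
      ring
  -- per-entry nonpositivity
  have hD0 : ∀ i j, i < n → j < n →
      M i (j + 1) + M (i + 1) j - M i j - M (i + 1) (j + 1) ≤ 0 := by
    intro i j hi hj
    rcases lt_trichotomy i j with h | rfl | h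
    · have key : lis i (j+1) + lis (i+1) j ≤ lis i j + lis (i+1) (j+1) := by
        obtain ⟨p, q, hpq, hp, hq⟩ := splice s i j (lis i (j+1)) (lis (i+1) j) h
          (hlis i (j+1) (by omega) (by omega)).1 (hlis (i+1) j (by omega) (by omega)).1
        have h1 := (hlis i j (by omega) (by omega)).2 hp
        have h2 := (hlis (i+1) (j+1) (by omega) (by omega)).2 hq
        omega
      rw [hM i (j+1) (by omega) (by omega), hM (i+1) j (by omega) (by omega),
        hM i j (by omega) (by omega), hM (i+1) (j+1) (by omega) (by omega),
        if_pos (show i < j + 1 by omega), if_pos h, if_pos (show i+1 < j+1 by omega)]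
      by_cases h2 : i + 1 < j
      · rw [if_pos h2]
        push_cast
        omega
      · rw [if_neg h2]
        have h3 : lis (i+1) j = 0 :=
          permlis_empty s (hlis (i+1) j (by omega) (by omega)).1 (by omega)
        rw [h3] at key
        push_cast
        omega
    · have h1 : lis i (i+1) ≤ 1 := permlis_le_one s (hlis i (i+1) (by omega) (by omega)).1
      rw [hM i (i+1) (by omega) (by omega), hM (i+1) i (by omega) (by omega),
        hM i i (by omega) (by omega), hM (i+1) (i+1) (by omega) (by omega),
        if_pos (show i < i + 1 by omega), if_neg (show ¬ i + 1 < i by omega),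
        if_neg (show ¬ i < i by omega), if_neg (show ¬ i + 1 < i + 1 by omega)]
      push_cast
      omega
    · rw [hM i (j+1) (by omega) (by omega), hM (i+1) j (by omega) (by omega),
        hM i j (by omega) (by omega), hM (i+1) (j+1) (by omega) (by omega),
        if_neg (show ¬ i < j + 1 by omega), if_neg (show ¬ i + 1 < j by omega),
        if_neg (show ¬ i < j by omega), if_neg (show ¬ i + 1 < j + 1 by omega)]
      push_cast
      omega
  refine ⟨part1, ?_, by omega⟩
  rw [← part1]
  set D : ℕ × ℕ → ℤ := fun x => M x.1 (x.2 + 1) + M (x.1 + 1) x.2 - M x.1 x.2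
    - M (x.1 + 1) (x.2 + 1) with hD
  have hsum : ∑ i ∈ Finset.range n, ∑ j ∈ Finset.range n,
      (M i (j + 1) + M (i + 1) j - M i j - M (i + 1) (j + 1))
      = ∑ x ∈ (Finset.range n) ×ˢ (Finset.range n), D x := by
    rw [Finset.sum_product]
  rw [hsum, ← Finset.sum_neg_distrib]
  calc ((((Finset.range n) ×ˢ (Finset.range n)).filter (fun x => D x ≠ 0)).card : ℤ)
      = ∑ _x ∈ ((Finset.range n) ×ˢ (Finset.range n)).filter (fun x => D x ≠ 0), (1 : ℤ) := by
        simp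
    _ ≤ ∑ x ∈ ((Finset.range n) ×ˢ (Finset.range n)).filter (fun x => D x ≠ 0), (-D x) := by
        refine Finset.sum_le_sum ?_
        intro x hx
        rw [Finset.mem_filter, Finset.mem_product, Finset.mem_range, Finset.mem_range] at hx
        have h1 := hD0 x.1 x.2 hx.1.1 hx.1.2
        have hne := hx.2
        have hDx : D x = M x.1 (x.2 + 1) + M (x.1 + 1) x.2 - M x.1 x.2
          - M (x.1 + 1) (x.2 + 1) := rfl
        omega
    _ ≤ ∑ x ∈ (Finset.range n) ×ˢ (Finset.range n), (-D x) := by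
        refine Finset.sum_le_sum_of_subset_of_nonneg (Finset.filter_subset _ _) ?_
        intro x hx _
        rw [Finset.mem_product, Finset.mem_range, Finset.mem_range] at hx
        have h1 := hD0 x.1 x.2 hx.1 hx.2
        have hDx : D x = M x.1 (x.2 + 1) + M (x.1 + 1) x.2 - M x.1 x.2
          - M (x.1 + 1) (x.2 + 1) := rfl
        omega
end
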